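/- arXiv:1207.5784 — 5 statements merged into one kernel-verified Lean document; each statement's English description precedes it below -/
import Mathlib

section
/- If f is analytic on the closed unit disk (or analytic on D with continuous extension) and Hölder continuous of order α ∈ (0,1/2) on D ∪ T, with Hölder constant A, then sup_{a∈D} (1-|a|^2)^{-2α} ∫_T |f(σ_a(ξ)) − f(a)|^2 |dξ| ≤ C·A^2 for a constant C depending only on α. (This is the case p = 1+2α of: the Lipschitz class A_{(p-1)/2} embeds in the Campanato space CA_p with equivalent norms, for p ∈ (1,2).) -/
/-- The Möbius involution `σ_a(z) = (a - z)/(1 - conj(a) z)` of the unit disk. -/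
noncomputable def mSigma (a z : ℂ) : ℂ := (a - z) / (1 - (starRingEnd ℂ) a * z)

/-- The squared boundary `L²` norm `∫_T ‖f(ξ)‖² |dξ|` over the unit circle. -/
noncomputable def bnormSq (f : ℂ → ℂ) : ℝ :=
  ∫ θ in (0:ℝ)..(2 * Real.pi), ‖f (Complex.exp (θ * Complex.I))‖ ^ 2

/-!
For `ξ` on the unit circle, `σ_a(ξ)` stays in the closed disk and
`|σ_a(ξ) - a| = (1 - |a|²) / |1 - ā ξ|`, so the Hölder condition bounds the integrand by
`A² (1 - |a|²)^{2α} |1 - ā ξ|^{-2α}`; the factor `(1 - |a|²)^{2α}` cancels the weight.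
What remains is `∫_T |1 - ā ξ|^{-2α} |dξ| ≤ 2π / (1 - 2α)`, uniformly in `a`: a rotation and the
reflection `θ ↦ 2π - θ` reduce it to twice an integral over `[0, π]`, where
`|1 - r e^{iθ}| ≥ sin (θ/2) ≥ θ/π`, and `θ^{-2α}` is integrable there since `2α < 1`.
-/

open Complex MeasureTheory intervalIntegral ComplexConjugate
open scoped Real

lemma one_sub_mul_exp_ne_zero {c : ℂ} (hc : ‖c‖ < 1) (θ : ℝ) : 1 - c * exp (θ * I) ≠ 0 := by
  refine sub_ne_zero.2 fun h => ?_
  have := congrArg norm h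
  simp only [norm_one, norm_mul, norm_exp_ofReal_mul_I, mul_one] at this
  linarith

lemma continuous_norm_one_sub_mul_exp_rpow {c : ℂ} (hc : ‖c‖ < 1) (s : ℝ) :
    Continuous fun θ : ℝ => ‖1 - c * exp (θ * I)‖ ^ s :=
  (by fun_prop : Continuous fun θ : ℝ => ‖1 - c * exp (θ * I)‖).rpow_const
    fun θ => Or.inl (norm_ne_zero_iff.2 (one_sub_mul_exp_ne_zero hc θ))

lemma integral_comp_mul_exp_eq_norm {E : Type*} [NormedAddCommGroup E] [NormedSpace ℝ E]
    (F : ℂ → E) (c : ℂ) :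
    ∫ θ in (0:ℝ)..2 * π, F (c * exp (θ * I)) = ∫ θ in (0:ℝ)..2 * π, F (‖c‖ * exp (θ * I)) := by
  have hper : Function.Periodic (fun θ : ℝ => F (‖c‖ * exp (θ * I))) (2 * π) := fun θ => by
    simp only [ofReal_add, ofReal_mul, ofReal_ofNat, add_mul, exp_add, exp_two_pi_mul_I, mul_one]
  have hrot : ∀ θ : ℝ, c * exp (θ * I) = ‖c‖ * exp (↑(θ + arg c) * I) := fun θ => by
    conv_lhs => rw [← norm_mul_exp_arg_mul_I c]
    push_cast
    rw [add_mul, exp_add]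
    ring
  simp_rw [hrot]
  rw [integral_comp_add_right (fun θ : ℝ => F (‖c‖ * exp (θ * I))), zero_add, add_comm _ (arg c),
    hper.intervalIntegral_add_eq (arg c) 0, zero_add]

lemma integral_zero_two_mul_eq_two_mul_of_symm {h : ℝ → ℝ} {T : ℝ}
    (hint : IntervalIntegrable h volume 0 (2 * T)) (hsymm : ∀ t, h (2 * T - t) = h t) :
    ∫ t in (0:ℝ)..2 * T, h t = 2 * ∫ t in (0:ℝ)..T, h t := by
  have hrefl : ∫ t in T..2 * T, h t = ∫ t in (0:ℝ)..T, h t := by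
    have hcomp := integral_comp_sub_left (a := 0) (b := T) h (2 * T)
    rw [sub_zero, two_mul, add_sub_cancel_right, ← two_mul] at hcomp
    simpa only [hsymm] using hcomp.symm
  have hT : T ∈ Set.uIcc 0 (2 * T) := Set.mem_uIcc.2 (by
    rcases le_total 0 T with h | h <;> [left; right] <;> constructor <;> linarith)
  rw [← integral_add_adjacent_intervals
      (hint.mono_set (Set.uIcc_subset_uIcc Set.left_mem_uIcc hT))
      (hint.mono_set (Set.uIcc_subset_uIcc hT Set.right_mem_uIcc)),
    hrefl, two_mul]

lemma abs_sin_half_le_norm_one_sub_ofReal_mul_exp {r : ℝ} (hr : 0 ≤ r) (t : ℝ) :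
    |Real.sin (t / 2)| ≤ ‖1 - r * exp (t * I)‖ := by
  have hnorm : ‖1 - r * exp (t * I)‖ ^ 2 = 1 - 2 * r * Real.cos t + r ^ 2 := by
    rw [Complex.sq_norm, normSq_apply]
    simp only [sub_re, one_re, mul_re, ofReal_re, exp_ofReal_mul_I_re, ofReal_im,
      exp_ofReal_mul_I_im, zero_mul, sub_zero, sub_im, one_im, mul_im, add_zero, zero_sub, mul_neg,
      neg_mul, neg_neg]
    nlinarith [Real.sin_sq_add_cos_sq t]
  have hsin : Real.sin (t / 2) ^ 2 = (1 - Real.cos t) / 2 := by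
    rw [Real.sin_sq_eq_half_sub, mul_div_cancel₀ _ two_ne_zero]; ring
  refine (sq_le_sq₀ (abs_nonneg _) (norm_nonneg _)).1 ?_
  rw [sq_abs, hnorm, hsin]
  have hc₁ := Real.cos_le_one t
  have hc₂ := Real.neg_one_le_cos t
  rcases le_or_gt (-1 / 2) (Real.cos t) with hc | hc
  · nlinarith [sq_nonneg (r - Real.cos t),
      mul_nonneg (sub_nonneg.2 hc₁) (by linarith : 0 ≤ 1 + 2 * Real.cos t)]
  · nlinarith [mul_nonneg hr (by linarith : 0 ≤ -Real.cos t)]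

lemma integral_norm_one_sub_ofReal_mul_exp_rpow_le {r s : ℝ} (hr : 0 ≤ r) (hr₁ : r < 1)
    (hs₀ : 0 ≤ s) (hs : s < 1) :
    ∫ t in (0:ℝ)..π, ‖1 - r * exp (t * I)‖ ^ (-s) ≤ π / (1 - s) := by
  have hr' : ‖(r : ℂ)‖ < 1 := by rwa [norm_real, Real.norm_of_nonneg hr]
  have hmajor : IntervalIntegrable (fun t : ℝ => π ^ s * t ^ (-s)) volume 0 π :=
    (intervalIntegral.intervalIntegrable_rpow' (by linarith)).const_mul _
  calc ∫ t in (0:ℝ)..π, ‖1 - r * exp (t * I)‖ ^ (-s)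
      ≤ ∫ t in (0:ℝ)..π, π ^ s * t ^ (-s) := by
        refine integral_mono_on_of_le_Ioo Real.pi_pos.le
          ((continuous_norm_one_sub_mul_exp_rpow hr' _).intervalIntegrable _ _) hmajor ?_
        rintro t ⟨ht₀, htπ⟩
        have hjordan : t / π ≤ |Real.sin (t / 2)| := by
          have := Real.mul_le_sin (x := t / 2) (by positivity) (by linarith)
          exact (by ring : t / π = 2 / π * (t / 2)).trans_le (this.trans (le_abs_self _))
        calc ‖1 - r * exp (t * I)‖ ^ (-s)
            ≤ (t / π) ^ (-s) := Real.rpow_le_rpow_of_nonpos (by positivity)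
              (hjordan.trans (abs_sin_half_le_norm_one_sub_ofReal_mul_exp hr t)) (by linarith)
          _ = π ^ s * t ^ (-s) := by
            rw [Real.div_rpow ht₀.le Real.pi_pos.le, Real.rpow_neg Real.pi_pos.le, div_inv_eq_mul,
              mul_comm]
    _ = π / (1 - s) := by
        rw [intervalIntegral.integral_const_mul, integral_rpow (Or.inl (by linarith)),
          Real.zero_rpow (by linarith), sub_zero, ← mul_div_assoc, ← Real.rpow_add Real.pi_pos,
          add_neg_cancel_left, Real.rpow_one, neg_add_eq_sub]

lemma integral_norm_one_sub_mul_exp_rpow_le {c : ℂ} (hc : ‖c‖ < 1) {s : ℝ} (hs₀ : 0 ≤ s)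
    (hs : s < 1) :
    ∫ θ in (0:ℝ)..2 * π, ‖1 - c * exp (θ * I)‖ ^ (-s) ≤ 2 * π / (1 - s) := by
  have hsymm : ∀ t : ℝ,
      ‖1 - ‖c‖ * exp (↑(2 * π - t) * I)‖ ^ (-s) = ‖1 - ‖c‖ * exp (t * I)‖ ^ (-s) := by
    intro t
    have : 1 - ‖c‖ * exp (↑(2 * π - t) * I) = conj (1 - ‖c‖ * exp (t * I)) := by
      rw [map_sub, map_one, map_mul, conj_ofReal, ← exp_conj, map_mul, conj_ofReal, conj_I]
      push_cast
      rw [sub_mul, exp_sub, exp_two_pi_mul_I, one_div, ← exp_neg, mul_neg]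
    rw [this, RCLike.norm_conj]
  have hc' : ‖((‖c‖ : ℝ) : ℂ)‖ < 1 := by rwa [norm_real, norm_norm]
  rw [integral_comp_mul_exp_eq_norm (fun z => ‖1 - z‖ ^ (-s)) c,
    integral_zero_two_mul_eq_two_mul_of_symm
      ((continuous_norm_one_sub_mul_exp_rpow hc' _).intervalIntegrable _ _) hsymm, mul_div_assoc]
  gcongr
  exact integral_norm_one_sub_ofReal_mul_exp_rpow_le (norm_nonneg c) hc hs₀ hs

lemma norm_sub_eq_norm_one_sub_conj_mul (a : ℂ) {ξ : ℂ} (hξ : ‖ξ‖ = 1) :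
    ‖a - ξ‖ = ‖1 - conj a * ξ‖ := by
  have hξξ : ξ * conj ξ = 1 := by rw [mul_conj, normSq_eq_norm_sq, hξ]; norm_num
  calc ‖a - ξ‖ = ‖ξ‖ * ‖conj (a - ξ)‖ := by rw [hξ, one_mul, RCLike.norm_conj]
    _ = ‖1 - conj a * ξ‖ := by rw [← norm_mul, map_sub, mul_sub, hξξ, norm_sub_rev, mul_comm]

lemma norm_mSigma_le_one (a : ℂ) {ξ : ℂ} (hξ : ‖ξ‖ = 1) : ‖mSigma a ξ‖ ≤ 1 := by
  rw [mSigma, norm_div, norm_sub_eq_norm_one_sub_conj_mul a hξ]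
  exact div_self_le_one _

lemma norm_mSigma_sub_self {a z : ℂ} (ha : ‖a‖ ≤ 1) (hz : 1 - conj a * z ≠ 0) :
    ‖mSigma a z - a‖ = ‖z‖ * (1 - ‖a‖ ^ 2) / ‖1 - conj a * z‖ := by
  have hσ : mSigma a z - a = z * (conj a * a - 1) / (1 - conj a * z) := by
    rw [mSigma, div_sub' hz]; ring_nf
  have hnum : ‖conj a * a - 1‖ = 1 - ‖a‖ ^ 2 := by
    rw [← normSq_eq_conj_mul_self, normSq_eq_norm_sq, ← ofReal_one, ← ofReal_sub, norm_real,
      Real.norm_of_nonpos (by nlinarith [norm_nonneg a]), neg_sub]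
  rw [hσ, norm_div, norm_mul, hnum]

section Holder

variable {f : ℂ → ℂ} {A α : ℝ}
  (hf : ∀ ξ₁ ∈ Metric.closedBall (0:ℂ) 1, ∀ ξ₂ ∈ Metric.closedBall (0:ℂ) 1,
    ‖f ξ₁ - f ξ₂‖ ≤ A * ‖ξ₁ - ξ₂‖ ^ α)
include hf

lemma sq_norm_comp_mSigma_exp_sub_le {a : ℂ} (ha : ‖a‖ < 1) (θ : ℝ) :
    ‖f (mSigma a (exp (θ * I))) - f a‖ ^ 2
      ≤ A ^ 2 * (1 - ‖a‖ ^ 2) ^ (2 * α) * ‖1 - conj a * exp (θ * I)‖ ^ (-(2 * α)) := by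
  have hd := one_sub_mul_exp_ne_zero (c := conj a) (by rwa [RCLike.norm_conj]) θ
  have hξ : ‖exp (θ * I)‖ = 1 := norm_exp_ofReal_mul_I θ
  have hdist := hf _ (mem_closedBall_zero_iff.2 (norm_mSigma_le_one a hξ)) a
    (mem_closedBall_zero_iff.2 ha.le)
  rw [norm_mSigma_sub_self ha.le hd, hξ, one_mul] at hdist
  have hnum : 0 ≤ 1 - ‖a‖ ^ 2 := by nlinarith [norm_nonneg a]
  calc ‖f (mSigma a (exp (θ * I))) - f a‖ ^ 2
      ≤ (A * ((1 - ‖a‖ ^ 2) / ‖1 - conj a * exp (θ * I)‖) ^ α) ^ 2 :=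
        pow_le_pow_left₀ (norm_nonneg _) hdist 2
    _ = A ^ 2 * (1 - ‖a‖ ^ 2) ^ (2 * α) * ‖1 - conj a * exp (θ * I)‖ ^ (-(2 * α)) := by
        rw [mul_pow, ← Real.rpow_mul_natCast (by positivity), Real.div_rpow hnum (norm_nonneg _),
          Real.rpow_neg (norm_nonneg _), mul_comm α, Nat.cast_ofNat, div_eq_mul_inv, mul_assoc]

lemma bnormSq_comp_mSigma_sub_le {a : ℂ} (ha : ‖a‖ < 1) :
    bnormSq (fun ξ => f (mSigma a ξ) - f a)
      ≤ A ^ 2 * (1 - ‖a‖ ^ 2) ^ (2 * α) *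
        ∫ θ in (0:ℝ)..2 * π, ‖1 - conj a * exp (θ * I)‖ ^ (-(2 * α)) := by
  have hca : ‖conj a‖ < 1 := by rwa [RCLike.norm_conj]
  rw [bnormSq, ← intervalIntegral.integral_const_mul,
    integral_of_le Real.two_pi_pos.le, integral_of_le Real.two_pi_pos.le]
  refine integral_mono_of_nonneg (ae_of_all _ fun θ => sq_nonneg _) ?_
    (ae_of_all _ (sq_norm_comp_mSigma_exp_sub_le hf ha))
  exact (((continuous_norm_one_sub_mul_exp_rpow hca _).const_mul _).intervalIntegrable 0 (2 * π)).1

end Holder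

/-- If `f` is analytic on the unit disk and Hölder continuous of order `α ∈ (0,1/2)` on the
closed disk with Hölder constant `A`, then
`sup_{a∈D} (1-|a|²)^{-2α} ∫_T |f(σ_a(ξ)) − f(a)|² |dξ| ≤ C A²` with `C = C(α)`. -/
theorem holder_implies_campanato (α : ℝ) (hα : α ∈ Set.Ioo (0:ℝ) (1/2)) :
    ∃ C > 0, ∀ (f : ℂ → ℂ) (A : ℝ),
      DifferentiableOn ℂ f (Metric.ball (0:ℂ) 1) →
      (∀ ξ₁ ∈ Metric.closedBall (0:ℂ) 1, ∀ ξ₂ ∈ Metric.closedBall (0:ℂ) 1,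
        ‖f ξ₁ - f ξ₂‖ ≤ A * ‖ξ₁ - ξ₂‖ ^ α) →
      ∀ a ∈ Metric.ball (0:ℂ) 1,
        (1 - ‖a‖ ^ 2) ^ (-(2 * α)) * bnormSq (fun ξ => f (mSigma a ξ) - f a) ≤ C * A ^ 2 := by
  obtain ⟨hα₀, hα₁⟩ := hα
  refine ⟨2 * π / (1 - 2 * α), div_pos Real.two_pi_pos (by linarith), ?_⟩
  intro f A _ hf a ha
  rw [mem_ball_zero_iff] at ha
  have hpos : 0 < 1 - ‖a‖ ^ 2 := by nlinarith [norm_nonneg a]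
  have hJ := integral_norm_one_sub_mul_exp_rpow_le (c := conj a) (by rwa [RCLike.norm_conj])
    (by linarith : 0 ≤ 2 * α) (by linarith)
  calc (1 - ‖a‖ ^ 2) ^ (-(2 * α)) * bnormSq (fun ξ => f (mSigma a ξ) - f a)
      ≤ (1 - ‖a‖ ^ 2) ^ (-(2 * α)) * (A ^ 2 * (1 - ‖a‖ ^ 2) ^ (2 * α) *
          ∫ θ in (0:ℝ)..2 * π, ‖1 - conj a * exp (θ * I)‖ ^ (-(2 * α))) := by
        gcongr
        exact bnormSq_comp_mSigma_sub_le hf ha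
    _ = A ^ 2 * ∫ θ in (0:ℝ)..2 * π, ‖1 - conj a * exp (θ * I)‖ ^ (-(2 * α)) := by
        have hcancel : (1 - ‖a‖ ^ 2) ^ (-(2 * α)) * (1 - ‖a‖ ^ 2) ^ (2 * α) = 1 := by
          rw [← Real.rpow_add hpos, neg_add_cancel, Real.rpow_zero]
        linear_combination (A ^ 2 * ∫ θ in (0:ℝ)..2 * π, ‖1 - conj a * exp (θ * I)‖ ^ (-(2 * α)))
          * hcancel
    _ ≤ 2 * π / (1 - 2 * α) * A ^ 2 := by
        rw [mul_comm]; gcongr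
end

section
/- Uniform boundedness of test functions: for p ∈ [0,2) and b ∈ D, let f_b(z) = (1-|b|^2)^{(1+p)/2}/(1-conj(b)z). Then sup_{b∈D} ‖f_b‖_{CA_p,*} < ∞, where ‖f‖_{CA_p,*} = sup_{a∈D} (1-|a|^2)^{(1-p)/2} ‖f∘σ_a − f(a)‖_2. -/
/-- The test function `f_b(z) = (1-|b|²)^{(1+p)/2}/(1 - conj(b) z)`. -/
noncomputable def testFun (p : ℝ) (b z : ℂ) : ℂ :=
  (((1 - ‖b‖ ^ 2) ^ ((1 + p) / 2) : ℝ) : ℂ) / (1 - (starRingEnd ℂ) b * z)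

/-! On the unit circle, `f_b ∘ σ_a - f_b(a)` equals
`-c b̄ (1 - |a|²) ξ / ((1 - b̄a)((1 - b̄a) - (ā - b̄)ξ))` with `c = (1 - |b|²)^((1+p)/2)`, so
its squared boundary norm is a Poisson integral and equals
`2π |b|² (1 - |b|²)^p (1 - |a|²) / |1 - b̄a|²` exactly. Multiplying by `(1 - |a|²)^(1-p)` leaves `2π |b|²` times
`(1 - |a|²)^(2-p) (1 - |b|²)^p / |1 - b̄a|²`, which is at most `4` for `0 ≤ p ≤ 2` because both
`1 - |a|²` and `1 - |b|²` are at most `2 |1 - b̄a|`. -/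

open Complex ComplexConjugate Real

lemma integral_poissonKernel_unitCircle {w : ℂ} (hw : ‖w‖ < 1) :
    ∫ θ in (0:ℝ)..2 * π, (1 - ‖w‖ ^ 2) / ‖exp (θ * I) - w‖ ^ 2 = 2 * π := by
  have h := (InnerProductSpace.harmonicOnNhd_const (1 : ℝ)).circleAverage_poissonKernel_smul
    (c := (0 : ℂ)) (R := 1) (w := w) (by simpa using hw)
  simp only [smul_eq_mul, circleAverage_def, mul_inv_rev, circleMap_zero, ofReal_one, one_mul,
    Pi.mul_apply, poissonKernel, sub_zero, norm_exp_ofReal_mul_I, one_pow, mul_one] at h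
  field_simp at h
  rwa [mul_comm π 2] at h

lemma norm_sub_mul_sq_eq_norm_conj_mul_sub_sq (α β : ℂ) {ξ : ℂ} (hξ : ‖ξ‖ = 1) :
    ‖α - β * ξ‖ ^ 2 = ‖conj α * ξ - conj β‖ ^ 2 := by
  have hξ' : ξ.re * ξ.re + ξ.im * ξ.im = 1 := by
    rw [← normSq_apply, ← Complex.sq_norm, hξ, one_pow]
  simp only [Complex.sq_norm, normSq_apply, sub_re, sub_im, mul_re, mul_im, conj_re, conj_im]
  linear_combination (β.re * β.re + β.im * β.im - α.re * α.re - α.im * α.im) * hξ'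

lemma integral_inv_norm_sub_mul_exp_sq {α β : ℂ} (h : ‖β‖ < ‖α‖) :
    ∫ θ in (0:ℝ)..2 * π, (‖α - β * exp (θ * I)‖ ^ 2)⁻¹ = 2 * π / (‖α‖ ^ 2 - ‖β‖ ^ 2) := by
  have hα : 0 < ‖α‖ := (norm_nonneg β).trans_lt h
  set w := conj β / conj α
  have hw : ‖w‖ = ‖β‖ / ‖α‖ := by simp [w]
  have hw1 : ‖w‖ < 1 := by rw [hw, div_lt_one hα]; exact h
  have hpt : ∀ θ : ℝ, (‖α - β * exp (θ * I)‖ ^ 2)⁻¹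
      = (‖α‖ ^ 2 * (1 - ‖w‖ ^ 2))⁻¹ * ((1 - ‖w‖ ^ 2) / ‖exp (θ * I) - w‖ ^ 2) := by
    intro θ
    have hconj : conj α * exp (θ * I) - conj β = conj α * (exp (θ * I) - w) := by
      have : conj α ≠ 0 := by simpa using hα.ne'
      rw [mul_sub, mul_div_cancel₀ _ this]
    rw [norm_sub_mul_sq_eq_norm_conj_mul_sub_sq α β (norm_exp_ofReal_mul_I θ), hconj, norm_mul,
      norm_conj]
    have : 0 < 1 - ‖w‖ ^ 2 := by nlinarith [norm_nonneg w]
    field_simp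
  simp_rw [hpt]
  rw [intervalIntegral.integral_const_mul, integral_poissonKernel_unitCircle hw1, hw]
  field_simp

lemma norm_one_sub_conj_mul_sq_sub_norm_conj_sub_sq (a b : ℂ) :
    ‖1 - conj b * a‖ ^ 2 - ‖conj a - conj b‖ ^ 2 = (1 - ‖a‖ ^ 2) * (1 - ‖b‖ ^ 2) := by
  simp only [Complex.sq_norm, normSq_apply, sub_re, sub_im, mul_re, mul_im, one_re, one_im,
    conj_re, conj_im]
  ring

lemma one_sub_norm_mul_norm_le_norm_one_sub_conj_mul (a b : ℂ) :
    1 - ‖a‖ * ‖b‖ ≤ ‖1 - conj b * a‖ := by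
  simpa [norm_mul, mul_comm] using norm_sub_norm_le (1 : ℂ) (conj b * a)

lemma one_sub_sq_le_two_mul_one_sub_mul {s t : ℝ} (hs : 0 ≤ s) (ht : t ≤ 1) :
    1 - s ^ 2 ≤ 2 * (1 - s * t) := by
  nlinarith [sq_nonneg (1 - s), mul_nonneg hs (sub_nonneg.mpr ht)]

lemma rpow_mul_rpow_le_rpow_add {x y M s t : ℝ} (hx : 0 ≤ x) (hy : 0 ≤ y) (hxM : x ≤ M)
    (hyM : y ≤ M) (hs : 0 ≤ s) (ht : 0 ≤ t) : x ^ s * y ^ t ≤ M ^ (s + t) := by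
  rw [Real.rpow_add_of_nonneg (hx.trans hxM) hs ht]
  exact mul_le_mul (Real.rpow_le_rpow hx hxM hs) (Real.rpow_le_rpow hy hyM ht)
    (Real.rpow_nonneg hy t) (Real.rpow_nonneg (hx.trans hxM) s)

lemma one_sub_norm_sq_rpow_mul_rpow_le {p : ℝ} (hp0 : 0 ≤ p) (hp2 : p ≤ 2) {a b : ℂ}
    (ha : ‖a‖ ≤ 1) (hb : ‖b‖ ≤ 1) :
    (1 - ‖a‖ ^ 2) ^ (2 - p) * (1 - ‖b‖ ^ 2) ^ p ≤ (2 * ‖1 - conj b * a‖) ^ 2 := by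
  have hab := one_sub_norm_mul_norm_le_norm_one_sub_conj_mul a b
  have hxα : 1 - ‖a‖ ^ 2 ≤ 2 * ‖1 - conj b * a‖ :=
    (one_sub_sq_le_two_mul_one_sub_mul (norm_nonneg a) hb).trans (by linarith)
  have hyα : 1 - ‖b‖ ^ 2 ≤ 2 * ‖1 - conj b * a‖ :=
    (one_sub_sq_le_two_mul_one_sub_mul (norm_nonneg b) ha).trans
      (by linarith [mul_comm ‖a‖ ‖b‖])
  simpa using rpow_mul_rpow_le_rpow_add (by nlinarith [norm_nonneg a])
    (by nlinarith [norm_nonneg b]) hxα hyα (sub_nonneg.mpr hp2) hp0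

lemma testFun_mSigma_sub (p : ℝ) {a b ξ : ℂ} (hξ : 1 - conj a * ξ ≠ 0)
    (hα : 1 - conj b * a ≠ 0) (hαβ : 1 - conj b * a - (conj a - conj b) * ξ ≠ 0) :
    testFun p b (mSigma a ξ) - testFun p b a =
      -(((1 - ‖b‖ ^ 2) ^ ((1 + p) / 2) : ℝ) * conj b * (1 - conj a * a) * ξ) /
        ((1 - conj b * a) * (1 - conj b * a - (conj a - conj b) * ξ)) := by
  have hden : 1 - conj b * mSigma a ξ =
      (1 - conj b * a - (conj a - conj b) * ξ) / (1 - conj a * ξ) := by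
    rw [mSigma, eq_div_iff hξ, sub_mul, mul_assoc, div_mul_cancel₀ _ hξ]
    ring
  rw [testFun, testFun, hden, div_div_eq_mul_div, div_sub_div _ _ hαβ hα,
    div_eq_div_iff (mul_ne_zero hαβ hα) (mul_ne_zero hα hαβ)]
  ring

lemma bnormSq_testFun_comp_mSigma_sub (p : ℝ) {a b : ℂ} (ha : ‖a‖ < 1) (hb : ‖b‖ < 1) :
    bnormSq (fun ξ => testFun p b (mSigma a ξ) - testFun p b a) =
      2 * π * ‖b‖ ^ 2 * (1 - ‖b‖ ^ 2) ^ p * (1 - ‖a‖ ^ 2) / ‖1 - conj b * a‖ ^ 2 := by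
  set α := 1 - conj b * a
  set β := conj a - conj b
  have hx : 0 < 1 - ‖a‖ ^ 2 := by nlinarith [norm_nonneg a]
  have hy : 0 < 1 - ‖b‖ ^ 2 := by nlinarith [norm_nonneg b]
  have hαβ_sq : ‖α‖ ^ 2 - ‖β‖ ^ 2 = (1 - ‖a‖ ^ 2) * (1 - ‖b‖ ^ 2) :=
    norm_one_sub_conj_mul_sq_sub_norm_conj_sub_sq a b
  have hβα : ‖β‖ < ‖α‖ := by nlinarith [norm_nonneg α, norm_nonneg β, mul_pos hx hy]
  have hα : α ≠ 0 := norm_pos_iff.mp ((norm_nonneg β).trans_lt hβα)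
  have hpt : ∀ θ : ℝ, ‖testFun p b (mSigma a (exp (θ * I))) - testFun p b a‖ ^ 2 =
      (1 - ‖b‖ ^ 2) ^ (1 + p) * ‖b‖ ^ 2 * (1 - ‖a‖ ^ 2) ^ 2 / ‖α‖ ^ 2 *
        (‖α - β * exp (θ * I)‖ ^ 2)⁻¹ := by
    intro θ
    have hξ : ‖exp (θ * I)‖ = 1 := norm_exp_ofReal_mul_I θ
    have h1 : 1 - conj a * exp (θ * I) ≠ 0 :=
      sub_ne_zero.mpr (ne_of_apply_ne norm (by simp [hξ, ha.ne']))
    have h2 : α - β * exp (θ * I) ≠ 0 :=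
      sub_ne_zero.mpr (ne_of_apply_ne norm (by rw [norm_mul, hξ, mul_one]; exact hβα.ne'))
    have hnorm_a : ‖1 - conj a * a‖ = 1 - ‖a‖ ^ 2 := by
      rw [conj_mul', ← ofReal_pow, ← ofReal_one, ← ofReal_sub, norm_real,
        Real.norm_of_nonneg hx.le]
    rw [testFun_mSigma_sub p h1 hα h2, show 1 - conj b * a = α from rfl,
      show conj a - conj b = β from rfl, norm_div, norm_neg]
    simp only [norm_mul, norm_conj, hξ, hnorm_a, norm_real,
      Real.norm_of_nonneg (Real.rpow_nonneg hy.le _)]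
    have hc : ((1 - ‖b‖ ^ 2) ^ ((1 + p) / 2)) ^ 2 = (1 - ‖b‖ ^ 2) ^ (1 + p) := by
      rw [← Real.rpow_mul_natCast hy.le]
      ring_nf
    rw [div_pow, mul_pow, mul_pow, mul_pow, mul_pow, hc]
    field_simp
  rw [bnormSq]
  simp_rw [hpt]
  rw [intervalIntegral.integral_const_mul, integral_inv_norm_sub_mul_exp_sq hβα, hαβ_sq,
    Real.rpow_add hy, Real.rpow_one]
  field_simp

/-- Uniform boundedness of the test functions: for `p ∈ [0,2)`,
`sup_{b∈D} ‖f_b‖_{CA_p,*} < ∞`, where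
`‖f‖_{CA_p,*} = sup_{a∈D} (1-|a|²)^{(1-p)/2} ‖f∘σ_a − f(a)‖₂`. -/
theorem testFun_uniformly_bounded (p : ℝ) (hp : p ∈ Set.Ico (0:ℝ) 2) :
    ∃ C : ℝ, ∀ b ∈ Metric.ball (0:ℂ) 1, ∀ a ∈ Metric.ball (0:ℂ) 1,
      (1 - ‖a‖ ^ 2) ^ ((1 - p) / 2) *
        Real.sqrt (bnormSq fun ξ => testFun p b (mSigma a ξ) - testFun p b a) ≤ C := by
  refine ⟨√(8 * π), fun b hb a ha => ?_⟩
  rw [mem_ball_zero_iff] at ha hb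
  have hx : 0 < 1 - ‖a‖ ^ 2 := by nlinarith [norm_nonneg a]
  have hy : 0 < 1 - ‖b‖ ^ 2 := by nlinarith [norm_nonneg b]
  have hα : 0 < ‖1 - conj b * a‖ := by
    nlinarith [one_sub_norm_mul_norm_le_norm_one_sub_conj_mul a b, norm_nonneg a, norm_nonneg b]
  have hx_pow :
      ((1 - ‖a‖ ^ 2) ^ ((1 - p) / 2)) ^ 2 * (1 - ‖a‖ ^ 2) = (1 - ‖a‖ ^ 2) ^ (2 - p) := by
    rw [← Real.rpow_mul_natCast hx.le, ← Real.rpow_add_one hx.ne']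
    ring_nf
  rw [bnormSq_testFun_comp_mSigma_sub p ha hb, ← Real.sqrt_sq (Real.rpow_nonneg hx.le _),
    ← Real.sqrt_mul (sq_nonneg _)]
  apply Real.sqrt_le_sqrt
  calc ((1 - ‖a‖ ^ 2) ^ ((1 - p) / 2)) ^ 2 *
        (2 * π * ‖b‖ ^ 2 * (1 - ‖b‖ ^ 2) ^ p * (1 - ‖a‖ ^ 2) / ‖1 - conj b * a‖ ^ 2)
      = 2 * π * ‖b‖ ^ 2 * ((1 - ‖a‖ ^ 2) ^ (2 - p) * (1 - ‖b‖ ^ 2) ^ p) /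
          ‖1 - conj b * a‖ ^ 2 := by
        rw [← hx_pow]
        ring
    _ ≤ 2 * π * 1 * (2 * ‖1 - conj b * a‖) ^ 2 / ‖1 - conj b * a‖ ^ 2 := by
        gcongr
        · nlinarith [norm_nonneg b]
        · exact one_sub_norm_sq_rpow_mul_rpow_le hp.1 hp.2.le ha.le hb.le
    _ = 8 * π := by
        field_simp
        ring
end

section
/- Composition bound in H^2: if g, ψ are analytic on D with g(0) = ψ(0) = 0, g ∈ H^2, and ψ maps D into D, then ‖g∘ψ‖_2 ≤ C ‖g‖_2 ‖ψ‖_2 for an absolute constant C, where ‖·‖_2 is the H^2 norm (boundary L^2 norm on the circle). -/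
open Complex Metric Real Set Filter Topology MeasureTheory Function ComplexConjugate

namespace Real

variable {E : Type*} [NormedAddCommGroup E] [NormedSpace ℝ E] {c c' : ℂ} {R R' : ℝ}

theorem norm_circleAverage_le_circleAverage_norm (f : ℂ → E) :
    ‖circleAverage f c R‖ ≤ circleAverage (fun z ↦ ‖f z‖) c R := by
  rw [circleAverage, circleAverage, norm_smul, smul_eq_mul, norm_inv,
    Real.norm_of_nonneg two_pi_pos.le]
  gcongr
  exact intervalIntegral.norm_integral_le_integral_norm two_pi_pos.le

theorem circleAverage_const_mul (a : ℝ) (f : ℂ → ℝ) :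
    circleAverage (fun z ↦ a * f z) c R = a * circleAverage f c R :=
  circleAverage_fun_smul (a := a) (f := f)

theorem sq_circleAverage_mul_le {p f : ℂ → ℝ} (hp : CircleIntegrable p c R)
    (hpf : CircleIntegrable (p * f) c R) (hpf2 : CircleIntegrable (p * f ^ 2) c R)
    (hp0 : ∀ z ∈ sphere c |R|, 0 ≤ p z) (hp1 : circleAverage p c R = 1) :
    circleAverage (p * f) c R ^ 2 ≤ circleAverage (p * f ^ 2) c R := by
  set B := circleAverage (p * f) c R
  have hexpand : p * (f - fun _ ↦ B) ^ 2 = p * f ^ 2 - (2 * B) • (p * f) + B ^ 2 • p := by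
    ext z; simp only [Pi.mul_apply, Pi.pow_apply, Pi.sub_apply, Pi.add_apply, Pi.smul_apply,
      smul_eq_mul]; ring
  have hvar : 0 ≤ circleAverage (p * (f - fun _ ↦ B) ^ 2) c R :=
    circleAverage_nonneg_of_nonneg fun z hz ↦ mul_nonneg (hp0 z hz) (sq_nonneg _)
  rw [hexpand, circleAverage_add (hpf2.sub hpf.const_smul) hp.const_smul,
    circleAverage_sub hpf2 hpf.const_smul, circleAverage_smul, circleAverage_smul, hp1] at hvar
  simp only [smul_eq_mul] at hvar
  nlinarith

theorem continuous_uncurry_comp_circleMap {X : Type*} [TopologicalSpace X] {F : ℂ → ℂ → X}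
    (hF : ContinuousOn (uncurry F) (sphere c |R| ×ˢ sphere c' |R'|)) :
    Continuous fun x : ℝ × ℝ ↦ F (circleMap c R x.1) (circleMap c' R' x.2) :=
  hF.comp_continuous (f := fun x : ℝ × ℝ ↦ (circleMap c R x.1, circleMap c' R' x.2))
    (by fun_prop) fun x ↦ ⟨circleMap_mem_sphere' c R x.1, circleMap_mem_sphere' c' R' x.2⟩

theorem circleIntegrable_circleAverage {F : ℂ → ℂ → E}
    (hF : ContinuousOn (uncurry F) (sphere c |R| ×ˢ sphere c' |R'|)) :
    CircleIntegrable (fun z ↦ circleAverage (F z) c' R') c R :=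
  ((intervalIntegral.continuous_parametric_intervalIntegral_of_continuous'
    (continuous_uncurry_comp_circleMap hF) 0 (2 * π)).const_smul _).intervalIntegrable _ _

theorem circleAverage_circleAverage_swap {F : ℂ → ℂ → E}
    (hF : ContinuousOn (uncurry F) (sphere c |R| ×ˢ sphere c' |R'|)) :
    circleAverage (fun z ↦ circleAverage (F z) c' R') c R =
      circleAverage (fun w ↦ circleAverage (fun z ↦ F z w) c R) c' R' := by
  simp only [circleAverage_def, intervalIntegral.integral_smul, smul_smul]
  congr 1
  simp only [intervalIntegral.integral_of_le two_pi_pos.le]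
  refine integral_integral_swap ?_
  rw [Measure.prod_restrict, ← Measure.volume_eq_prod]
  exact ((continuous_uncurry_comp_circleMap hF).continuousOn.integrableOn_compact
    (isCompact_Icc.prod isCompact_Icc)).mono_set
      (prod_mono Ioc_subset_Icc_self Ioc_subset_Icc_self)

end Real

section Poisson

variable {E : Type*} [NormedAddCommGroup E] [NormedSpace ℂ E] [CompleteSpace E]
  {c w : ℂ} {R : ℝ}

theorem continuousOn_poissonKernel_sphere (hw : w ∈ ball c R) :
    ContinuousOn (poissonKernel c w) (sphere c |R|) := by
  rw [poissonKernel_eq_re_herglotzRieszKernel]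
  exact continuous_re.comp_continuousOn (continuousOn_herglotzRieszKernel_sphere hw)

theorem poissonKernel_nonneg_of_mem_sphere (hw : w ∈ ball c R) {z : ℂ} (hz : z ∈ sphere c |R|) :
    0 ≤ poissonKernel c w z := by
  have hR : 0 < R := pos_of_mem_ball hw
  rw [mem_sphere_iff_norm, abs_of_pos hR] at hz
  rw [mem_ball_iff_norm] at hw
  rw [poissonKernel, hz]
  exact div_nonneg (sub_nonneg.mpr (pow_le_pow_left₀ (norm_nonneg _) hw.le 2)) (sq_nonneg _)

theorem circleAverage_poissonKernel (hw : w ∈ ball c R) :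
    circleAverage (poissonKernel c w) c R = 1 := by
  have hP := (continuousOn_poissonKernel_sphere hw).circleIntegrable'
  have h1 := (diffContOnCl_const (c := (1 : ℂ))).circleAverage_poissonKernel_smul hw
  apply ofReal_injective
  rw [← ofRealCLM_apply, ← ofRealCLM.circleAverage_comp_comm hP, ofReal_one, ← h1]
  congr 1
  ext z
  simp

theorem DiffContOnCl.norm_le_circleAverage_poissonKernel_mul {h : ℂ → E}
    (hh : DiffContOnCl ℂ h (ball c R)) (hw : w ∈ ball c R) :
    ‖h w‖ ≤ Real.circleAverage (poissonKernel c w * fun z ↦ ‖h z‖) c R := by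
  rw [← hh.circleAverage_poissonKernel_smul hw]
  refine (norm_circleAverage_le_circleAverage_norm _).trans_eq (circleAverage_congr_sphere ?_)
  intro z hz
  simp [norm_smul, abs_of_nonneg (poissonKernel_nonneg_of_mem_sphere hw hz)]

theorem DiffContOnCl.sq_norm_le_circleAverage_poissonKernel_mul {h : ℂ → E}
    (hh : DiffContOnCl ℂ h (ball c R)) (hw : w ∈ ball c R) :
    ‖h w‖ ^ 2 ≤ Real.circleAverage (poissonKernel c w * fun z ↦ ‖h z‖ ^ 2) c R := by
  have hR : 0 < R := pos_of_mem_ball hw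
  have hP := continuousOn_poissonKernel_sphere hw
  have hh' : ContinuousOn (fun z ↦ ‖h z‖) (sphere c |R|) := by
    refine (hh.continuousOn.mono ?_).norm
    rw [closure_ball c hR.ne', abs_of_pos hR]
    exact sphere_subset_closedBall
  calc ‖h w‖ ^ 2 ≤ Real.circleAverage (poissonKernel c w * fun z ↦ ‖h z‖) c R ^ 2 := by
        gcongr; exact hh.norm_le_circleAverage_poissonKernel_mul hw
    _ ≤ _ := sq_circleAverage_mul_le hP.circleIntegrable' (hP.mul hh').circleIntegrable'
        (hP.mul (hh'.pow 2)).circleIntegrable'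
        (fun z hz ↦ poissonKernel_nonneg_of_mem_sphere hw hz) (circleAverage_poissonKernel hw)

end Poisson

theorem continuousOn_uncurry_poissonKernel (c : ℂ) :
    ContinuousOn (uncurry (poissonKernel c)) {p | p.1 ≠ p.2} := by
  simp only [uncurry_def, poissonKernel]
  refine ContinuousOn.div (by fun_prop) (by fun_prop) fun p hp ↦ ?_
  simpa [sub_eq_zero] using Ne.symm hp

theorem sq_norm_mul_poissonKernel_le {v : ℂ} (hv : ‖v‖ < 1) :
    ‖v‖ ^ 2 * poissonKernel 0 v 1 ≤ 3 * ‖v‖ ^ 2 + 2 * (v ^ 2 / (1 - v)).re := by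
  have hv1 : v ≠ 1 := by rintro rfl; simp at hv
  have h1v : (1 : ℂ) - v ≠ 0 := sub_ne_zero.mpr hv1.symm
  have hre : ((conj v - 1) * v ^ 2 / (1 - v)).re ≤ ‖v‖ ^ 2 := by
    refine (re_le_norm _).trans_eq ?_
    have : ‖conj v - 1‖ = ‖1 - v‖ := by
      rw [← norm_conj, map_sub, conj_conj, map_one, norm_sub_rev]
    rw [norm_div, norm_mul, norm_pow, this]
    field_simp [norm_ne_zero_iff.mpr h1v]
  have hidentity : ((‖v‖ ^ 2 : ℝ) : ℂ) * ((1 + v) / (1 - v)) =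
      ‖v‖ ^ 2 + 2 * (v ^ 2 / (1 - v)) + 2 * ((conj v - 1) * v ^ 2 / (1 - v)) := by
    push_cast
    rw [← conj_mul']
    field_simp
    ring
  have hre_identity := congrArg re hidentity
  rw [re_ofReal_mul] at hre_identity
  rw [poissonKernel_eq_re_herglotzRieszKernel, comp_apply, herglotzRieszKernel]
  simp only [sub_zero]
  rw [hre_identity]
  simp only [add_re, ← ofReal_pow, ofReal_re, mul_re, re_ofNat, im_ofNat, zero_mul, sub_zero]
  linarith

theorem poissonKernel_zero_eq_of_norm_eq_one {η : ℂ} (hη : ‖η‖ = 1) (w : ℂ) :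
    poissonKernel 0 w η = poissonKernel 0 (conj η * w) 1 := by
  have hηη : conj η * η = 1 := by rw [conj_mul', hη]; simp
  have : (1 : ℂ) - conj η * w = conj η * (η - w) := by rw [mul_sub, hηη]
  simp [poissonKernel, this, hη]

theorem DiffContOnCl.dslope {E : Type*} [NormedAddCommGroup E] [NormedSpace ℂ E] [CompleteSpace E]
    {g : ℂ → E} {c : ℂ} {R : ℝ} (hg : DiffContOnCl ℂ g (ball c R)) :
    DiffContOnCl ℂ (dslope g c) (ball c R) := by
  rcases le_or_gt R 0 with hR | hR
  · rw [ball_eq_empty.2 hR]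
    exact ⟨differentiableOn_empty, by simp⟩
  have hc : ball c R ∈ 𝓝 c := ball_mem_nhds c hR
  exact ⟨(differentiableOn_dslope hc).2 hg.1,
    (continuousOn_dslope (mem_of_superset hc subset_closure)).2
      ⟨hg.2, hg.differentiableAt isOpen_ball (mem_ball_self hR)⟩⟩

theorem DiffContOnCl.sq_div_one_sub {u : ℂ → ℂ} (hu : DiffContOnCl ℂ u (ball 0 1))
    (hu1 : MapsTo u (closedBall 0 1) (ball 0 1)) :
    DiffContOnCl ℂ (fun z ↦ u z ^ 2 / (1 - u z)) (ball 0 1) := by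
  have hu_ne {z : ℂ} (hz : z ∈ closedBall 0 1) : 1 - u z ≠ 0 := by
    refine sub_ne_zero.mpr fun h ↦ ?_
    simpa [← h] using hu1 hz
  exact .mk_ball ((hu.differentiableOn.pow 2).div (hu.differentiableOn.const_sub 1)
      fun z hz ↦ hu_ne (ball_subset_closedBall hz))
    ((hu.continuousOn_ball.pow 2).div (continuousOn_const.sub hu.continuousOn_ball)
      fun z hz ↦ hu_ne hz)

theorem sphere_zero_abs_one_subset_closedBall : sphere (0 : ℂ) |1| ⊆ closedBall 0 1 := by
  rw [abs_one]; exact sphere_subset_closedBall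

section Composition

variable {φ : ℂ → ℂ} (hφ : DiffContOnCl ℂ φ (ball 0 1))
  (hφ1 : MapsTo φ (closedBall 0 1) (ball 0 1))
include hφ hφ1

theorem continuousOn_poissonKernel_comp :
    ContinuousOn (fun p : ℂ × ℂ ↦ poissonKernel 0 (φ p.1) p.2) (sphere 0 |1| ×ˢ sphere 0 1) := by
  refine (continuousOn_uncurry_poissonKernel 0).comp (f := fun p : ℂ × ℂ ↦ (φ p.1, p.2))
    (((hφ.continuousOn_ball.mono sphere_zero_abs_one_subset_closedBall).comp continuousOn_fst
      fun p hp ↦ hp.1).prodMk continuousOn_snd) fun p hp hφp ↦ ?_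
  have := mem_ball_zero_iff.mp (hφ1 (sphere_zero_abs_one_subset_closedBall hp.1))
  rw [show φ p.1 = p.2 from hφp, ← mem_sphere_zero_iff_norm.mp hp.2] at this
  exact lt_irrefl _ this

theorem circleAverage_sq_norm_mul_poissonKernel_le (hφ0 : φ 0 = 0) {η : ℂ} (hη : ‖η‖ = 1) :
    circleAverage (fun z ↦ ‖φ z‖ ^ 2 * poissonKernel 0 (φ z) η) 0 1 ≤
      3 * circleAverage (fun z ↦ ‖φ z‖ ^ 2) 0 1 := by
  set u : ℂ → ℂ := fun z ↦ conj η * φ z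
  have hnorm_u (z : ℂ) : ‖u z‖ = ‖φ z‖ := by simp [u, hη]
  have hu1 : MapsTo u (closedBall 0 1) (ball 0 1) := fun z hz ↦ by
    simpa [hnorm_u] using hφ1 hz
  have hq := (hφ.const_smul (conj η)).sq_div_one_sub hu1
  have hq_cont : ContinuousOn (fun z ↦ u z ^ 2 / (1 - u z)) (sphere 0 |1|) :=
    hq.continuousOn_ball.mono sphere_zero_abs_one_subset_closedBall
  have hq_int := hq_cont.circleIntegrable'
  have hmean : circleAverage (fun z ↦ (u z ^ 2 / (1 - u z)).re) 0 1 = 0 := by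
    have hq' : DiffContOnCl ℂ (fun z ↦ u z ^ 2 / (1 - u z)) (ball 0 |1|) := by rwa [abs_one]
    change circleAverage (reCLM ∘ fun z ↦ u z ^ 2 / (1 - u z)) 0 1 = 0
    rw [reCLM.circleAverage_comp_comm hq_int, hq'.circleAverage]
    simp [u, hφ0]
  have hP : ContinuousOn (fun z ↦ poissonKernel 0 (φ z) η) (sphere 0 |1|) :=
    (continuousOn_poissonKernel_comp hφ hφ1).comp (f := fun z ↦ (z, η))
      (continuousOn_id.prodMk continuousOn_const)
      fun z hz ↦ ⟨hz, mem_sphere_zero_iff_norm.mpr hη⟩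
  have hφ_cont : ContinuousOn (fun z ↦ ‖φ z‖ ^ 2) (sphere 0 |1|) :=
    (hφ.continuousOn_ball.mono sphere_zero_abs_one_subset_closedBall).norm.pow 2
  calc circleAverage (fun z ↦ ‖φ z‖ ^ 2 * poissonKernel 0 (φ z) η) 0 1
      ≤ circleAverage (fun z ↦ 3 * ‖φ z‖ ^ 2 + 2 * (u z ^ 2 / (1 - u z)).re) 0 1 := by
        refine circleAverage_mono (hφ_cont.mul hP).circleIntegrable' ?_ fun z hz ↦ ?_
        · exact ((continuousOn_const.mul hφ_cont).add
            (continuousOn_const.mul (continuous_re.comp_continuousOn hq_cont))).circleIntegrable'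
        rw [poissonKernel_zero_eq_of_norm_eq_one hη, ← hnorm_u]
        exact sq_norm_mul_poissonKernel_le
          (mem_ball_zero_iff.mp (hu1 (sphere_zero_abs_one_subset_closedBall hz)))
    _ = 3 * circleAverage (fun z ↦ ‖φ z‖ ^ 2) 0 1 := by
        have h3 : CircleIntegrable (fun z ↦ 3 * ‖φ z‖ ^ 2) 0 1 :=
          (continuousOn_const.mul hφ_cont).circleIntegrable'
        have h2 : CircleIntegrable (fun z ↦ 2 * (u z ^ 2 / (1 - u z)).re) 0 1 :=
          (continuousOn_const.mul (continuous_re.comp_continuousOn hq_cont)).circleIntegrable'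
        rw [circleAverage_fun_add h3 h2, circleAverage_const_mul, circleAverage_const_mul, hmean,
          mul_zero, add_zero]

variable {E : Type*} [NormedAddCommGroup E] [NormedSpace ℂ E] [CompleteSpace E]

theorem circleAverage_sq_norm_mul_sq_norm_comp_le (hφ0 : φ 0 = 0) {h : ℂ → E}
    (hh : DiffContOnCl ℂ h (ball 0 1)) :
    circleAverage (fun z ↦ ‖φ z‖ ^ 2 * ‖h (φ z)‖ ^ 2) 0 1 ≤
      3 * circleAverage (fun z ↦ ‖φ z‖ ^ 2) 0 1 * circleAverage (fun z ↦ ‖h z‖ ^ 2) 0 1 := by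
  set K : ℂ → ℂ → ℝ := fun z ζ ↦ ‖φ z‖ ^ 2 * (poissonKernel 0 (φ z) ζ * ‖h ζ‖ ^ 2)
  have hφ_cont : ContinuousOn (fun z ↦ ‖φ z‖ ^ 2) (sphere 0 |1|) :=
    (hφ.continuousOn_ball.mono sphere_zero_abs_one_subset_closedBall).norm.pow 2
  have hh_cont : ContinuousOn (fun z ↦ ‖h z‖ ^ 2) (sphere 0 |1|) :=
    (hh.continuousOn_ball.mono sphere_zero_abs_one_subset_closedBall).norm.pow 2
  have hhφ_cont : ContinuousOn (fun z ↦ ‖h (φ z)‖ ^ 2) (sphere 0 |1|) :=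
    (hh.continuousOn_ball.comp (hφ.continuousOn_ball.mono sphere_zero_abs_one_subset_closedBall)
      fun z hz ↦ ball_subset_closedBall (hφ1 (sphere_zero_abs_one_subset_closedBall hz))).norm.pow 2
  have hK : ContinuousOn (uncurry K) (sphere 0 |1| ×ˢ sphere 0 |1|) :=
    (hφ_cont.comp continuousOn_fst fun p hp ↦ hp.1).mul
      (((continuousOn_poissonKernel_comp hφ hφ1).mono (by rw [abs_one])).mul
        (hh_cont.comp continuousOn_snd fun p hp ↦ hp.2))
  have hK_swap : ContinuousOn (uncurry fun ζ z ↦ K z ζ) (sphere 0 |1| ×ˢ sphere 0 |1|) :=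
    hK.comp continuous_swap.continuousOn fun p hp ↦ ⟨hp.2, hp.1⟩
  calc circleAverage (fun z ↦ ‖φ z‖ ^ 2 * ‖h (φ z)‖ ^ 2) 0 1
      ≤ circleAverage (fun z ↦ circleAverage (K z) 0 1) 0 1 := by
        refine circleAverage_mono (hφ_cont.mul hhφ_cont).circleIntegrable'
          (circleIntegrable_circleAverage hK) fun z hz ↦ ?_
        rw [circleAverage_const_mul]
        exact mul_le_mul_of_nonneg_left (hh.sq_norm_le_circleAverage_poissonKernel_mul
          (hφ1 (sphere_zero_abs_one_subset_closedBall hz))) (sq_nonneg _)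
    _ = circleAverage (fun ζ ↦ circleAverage (fun z ↦ K z ζ) 0 1) 0 1 :=
        circleAverage_circleAverage_swap hK
    _ ≤ circleAverage (fun ζ ↦ 3 * circleAverage (fun z ↦ ‖φ z‖ ^ 2) 0 1 * ‖h ζ‖ ^ 2) 0 1 := by
        refine circleAverage_mono (circleIntegrable_circleAverage hK_swap)
          (continuousOn_const.mul hh_cont).circleIntegrable' fun ζ hζ ↦ ?_
        have hK_ζ : (fun z ↦ K z ζ) =
            fun z ↦ ‖h ζ‖ ^ 2 * (‖φ z‖ ^ 2 * poissonKernel 0 (φ z) ζ) := by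
          ext z; ring
        rw [hK_ζ, circleAverage_const_mul, mul_comm]
        exact mul_le_mul_of_nonneg_right (circleAverage_sq_norm_mul_poissonKernel_le hφ hφ1 hφ0
          (by simpa using hζ)) (sq_nonneg _)
    _ = _ := circleAverage_const_mul _ _

theorem circleAverage_sq_norm_comp_le_of_mapsTo_ball (hφ0 : φ 0 = 0) {g : ℂ → E}
    (hg : DiffContOnCl ℂ g (ball 0 1)) (hg0 : g 0 = 0) :
    circleAverage (fun z ↦ ‖g (φ z)‖ ^ 2) 0 1 ≤
      3 * circleAverage (fun z ↦ ‖φ z‖ ^ 2) 0 1 * circleAverage (fun z ↦ ‖g z‖ ^ 2) 0 1 := by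
  have hfactor (z : ℂ) : ‖g z‖ ^ 2 = ‖z‖ ^ 2 * ‖dslope g 0 z‖ ^ 2 := by
    have := sub_smul_dslope g 0 z
    rw [sub_zero, hg0, sub_zero] at this
    rw [← this, norm_smul, mul_pow]
  have hcircle : circleAverage (fun z ↦ ‖g z‖ ^ 2) 0 1 =
      circleAverage (fun z ↦ ‖dslope g 0 z‖ ^ 2) 0 1 :=
    circleAverage_congr_sphere fun z hz ↦ by simp [hfactor, mem_sphere_zero_iff_norm.mp hz]
  rw [hcircle]
  simp only [hfactor]
  exact circleAverage_sq_norm_mul_sq_norm_comp_le hφ hφ1 hφ0 hg.dslope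

end Composition

theorem continuousOn_circleAverage_sq_norm_comp_smul {E : Type*} [NormedAddCommGroup E]
    {g : ℂ → E} {ψ : ℂ → ℂ}
    (hg : ContinuousOn g (closedBall 0 1)) (hψ : ContinuousOn ψ (sphere 0 1))
    (hψ1 : MapsTo ψ (sphere 0 1) (closedBall 0 1)) :
    ContinuousOn (fun s : ℝ ↦ circleAverage (fun z ↦ ‖g (s * ψ z)‖ ^ 2) 0 1) (Icc 0 1) := by
  rw [continuousOn_iff_continuous_domRestrict]
  have hψ_circle : Continuous fun θ : ℝ ↦ ψ (circleMap 0 1 θ) :=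
    hψ.comp_continuous (continuous_circleMap 0 1) (circleMap_mem_sphere 0 zero_le_one)
  refine ((intervalIntegral.continuous_parametric_intervalIntegral_of_continuous'
    (f := fun (s : Icc (0 : ℝ) 1) θ ↦ ‖g (s * ψ (circleMap 0 1 θ))‖ ^ 2) (μ := volume) ?_ 0
    (2 * π)).const_smul (2 * π)⁻¹ :)
  refine (hg.comp_continuous (f := fun x : Icc (0 : ℝ) 1 × ℝ ↦ (x.1 : ℂ) * ψ (circleMap 0 1 x.2))
    ((continuous_ofReal.comp (continuous_subtype_val.comp continuous_fst)).mul
      (hψ_circle.comp continuous_snd)) fun x ↦ ?_).norm.pow 2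
  have hx := x.1.2
  have hψx := mem_closedBall_zero_iff.mp (hψ1 (circleMap_mem_sphere 0 zero_le_one x.2))
  rw [mem_closedBall_zero_iff, norm_mul, norm_real, Real.norm_of_nonneg hx.1]
  exact mul_le_one₀ hx.2 (norm_nonneg _) hψx

theorem circleAverage_sq_norm_comp_le {E : Type*} [NormedAddCommGroup E] [NormedSpace ℂ E]
    [CompleteSpace E] {g : ℂ → E} {ψ : ℂ → ℂ}
    (hg : DiffContOnCl ℂ g (ball 0 1)) (hg0 : g 0 = 0) (hψ : DiffContOnCl ℂ ψ (ball 0 1))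
    (hψ0 : ψ 0 = 0) (hψ1 : MapsTo ψ (closedBall 0 1) (closedBall 0 1)) :
    circleAverage (fun z ↦ ‖g (ψ z)‖ ^ 2) 0 1 ≤
      3 * circleAverage (fun z ↦ ‖ψ z‖ ^ 2) 0 1 * circleAverage (fun z ↦ ‖g z‖ ^ 2) 0 1 := by
  have hF := (continuousOn_circleAverage_sq_norm_comp_smul hg.continuousOn_ball
    (hψ.continuousOn_ball.mono sphere_subset_closedBall)
    (hψ1.mono_left sphere_subset_closedBall)).continuousWithinAt (right_mem_Icc.mpr zero_le_one)
  suffices hbound : ∀ s ∈ Ico (0 : ℝ) 1, circleAverage (fun z ↦ ‖g (s * ψ z)‖ ^ 2) 0 1 ≤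
      3 * circleAverage (fun z ↦ ‖ψ z‖ ^ 2) 0 1 * circleAverage (fun z ↦ ‖g z‖ ^ 2) 0 1 by
    simpa using (hF.mono Ico_subset_Icc_self).closure_le (by simp [closure_Ico zero_ne_one])
      continuousWithinAt_const hbound
  intro s hs
  have hφ : DiffContOnCl ℂ (fun z ↦ (s : ℂ) * ψ z) (ball 0 1) := hψ.const_smul (s : ℂ)
  have hφ1 : MapsTo (fun z ↦ (s : ℂ) * ψ z) (closedBall 0 1) (ball 0 1) := fun z hz ↦ by
    rw [mem_ball_zero_iff, norm_mul, norm_real, Real.norm_of_nonneg hs.1]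
    exact mul_lt_one_of_nonneg_of_lt_one_left hs.1 hs.2 (mem_closedBall_zero_iff.mp (hψ1 hz))
  have hψ_nonneg : 0 ≤ circleAverage (fun z ↦ ‖ψ z‖ ^ 2) 0 1 :=
    circleAverage_nonneg_of_nonneg fun z _ ↦ sq_nonneg _
  have hg_nonneg : 0 ≤ circleAverage (fun z ↦ ‖g z‖ ^ 2) 0 1 :=
    circleAverage_nonneg_of_nonneg fun z _ ↦ sq_nonneg _
  calc circleAverage (fun z ↦ ‖g (s * ψ z)‖ ^ 2) 0 1
      ≤ 3 * circleAverage (fun z ↦ ‖(s : ℂ) * ψ z‖ ^ 2) 0 1 *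
          circleAverage (fun z ↦ ‖g z‖ ^ 2) 0 1 :=
        circleAverage_sq_norm_comp_le_of_mapsTo_ball hφ hφ1 (by simp [hψ0]) hg hg0
    _ = 3 * (s ^ 2 * circleAverage (fun z ↦ ‖ψ z‖ ^ 2) 0 1) *
          circleAverage (fun z ↦ ‖g z‖ ^ 2) 0 1 := by
        simp only [norm_mul, norm_real, mul_pow, Real.norm_eq_abs, sq_abs, circleAverage_const_mul]
    _ ≤ 3 * circleAverage (fun z ↦ ‖ψ z‖ ^ 2) 0 1 * circleAverage (fun z ↦ ‖g z‖ ^ 2) 0 1 := by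
        gcongr
        exact mul_le_of_le_one_left hψ_nonneg (pow_le_one₀ hs.1 hs.2.le)

theorem bnormSq_eq_two_pi_mul_circleAverage (f : ℂ → ℂ) :
    bnormSq f = 2 * π * circleAverage (fun z ↦ ‖f z‖ ^ 2) 0 1 := by
  rw [circleAverage_def, smul_eq_mul, ← mul_assoc, mul_inv_cancel₀ two_pi_pos.ne', one_mul,
    bnormSq]
  simp [circleMap]

/-- Composition bound in `H²`: there is an absolute constant `C` such that whenever
`g, ψ` are analytic on the unit disk (with boundary values), `g(0) = ψ(0) = 0`, `g ∈ H²`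
and `ψ` maps the disk into itself, then `‖g∘ψ‖₂ ≤ C ‖g‖₂ ‖ψ‖₂`. -/
theorem composition_H2_bound :
    ∃ C > 0, ∀ g ψ : ℂ → ℂ,
      DifferentiableOn ℂ g (Metric.ball (0:ℂ) 1) →
      ContinuousOn g (Metric.closedBall (0:ℂ) 1) →
      DifferentiableOn ℂ ψ (Metric.ball (0:ℂ) 1) →
      ContinuousOn ψ (Metric.closedBall (0:ℂ) 1) →
      Set.MapsTo ψ (Metric.ball (0:ℂ) 1) (Metric.ball (0:ℂ) 1) →
      Set.MapsTo ψ (Metric.closedBall (0:ℂ) 1) (Metric.closedBall (0:ℂ) 1) →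
      g 0 = 0 → ψ 0 = 0 →
      Real.sqrt (bnormSq (g ∘ ψ)) ≤
        C * Real.sqrt (bnormSq g) * Real.sqrt (bnormSq ψ) := by
  refine ⟨1, one_pos, fun g ψ hgd hgc hψd hψc _ hψ1 hg0 hψ0 ↦ ?_⟩
  have key := circleAverage_sq_norm_comp_le (.mk_ball hgd hgc) hg0 (.mk_ball hψd hψc) hψ0 hψ1
  simp only [bnormSq_eq_two_pi_mul_circleAverage, comp_apply, one_mul]
  set A := circleAverage (fun z ↦ ‖g (ψ z)‖ ^ 2) 0 1
  set G := circleAverage (fun z ↦ ‖g z‖ ^ 2) 0 1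
  set P := circleAverage (fun z ↦ ‖ψ z‖ ^ 2) 0 1
  have hG : 0 ≤ G := circleAverage_nonneg_of_nonneg fun z _ ↦ sq_nonneg _
  have hP : 0 ≤ P := circleAverage_nonneg_of_nonneg fun z _ ↦ sq_nonneg _
  rw [← Real.sqrt_mul (mul_nonneg two_pi_pos.le hG)]
  refine Real.sqrt_le_sqrt ?_
  calc 2 * π * A ≤ 2 * π * (3 * P * G) := by gcongr
    _ ≤ 2 * π * (2 * π * P * G) := by gcongr; linarith [pi_gt_three]
    _ = 2 * π * G * (2 * π * P) := by ring
end

section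
/- If p ∈ [0,1] and φ is an analytic self-map of D with φ(0) = 0, then for every f with ‖f‖_{CA_p,*} < ∞ one has ‖f∘φ‖_{CA_p,*} ≤ ‖f‖_{CA_p,*}. In particular C_φ is a contraction on the Campanato space CA_p (with respect to the seminorm) when φ fixes the origin. -/
open Metric Set Filter Topology Polynomial ComplexConjugate Real

section Mobius

variable {a z : ℂ}

theorem one_sub_conj_mul_ne_zero (ha : ‖a‖ < 1) (hz : ‖z‖ ≤ 1) : 1 - conj a * z ≠ 0 := by
  refine sub_ne_zero.2 fun h => (?_ : ‖conj a * z‖ < 1).ne' (by rw [← h, norm_one])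
  rw [norm_mul, Complex.norm_conj]
  nlinarith [norm_nonneg a, norm_nonneg z]

theorem sq_norm_one_sub_conj_mul_sub_sq_norm_sub (a z : ℂ) :
    ‖1 - conj a * z‖ ^ 2 - ‖a - z‖ ^ 2 = (1 - ‖a‖ ^ 2) * (1 - ‖z‖ ^ 2) := by
  simp only [Complex.sq_norm, Complex.normSq_sub, Complex.normSq_conj, map_mul,
    Complex.conj_conj, map_one, one_mul]
  ring

theorem mapsTo_mSigma_ball (ha : ‖a‖ < 1) : MapsTo (mSigma a) (ball 0 1) (ball 0 1) := by
  intro z hz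
  rw [mem_ball_zero_iff] at hz ⊢
  have hD := one_sub_conj_mul_ne_zero ha hz.le
  rw [mSigma, norm_div, div_lt_one (norm_pos_iff.2 hD)]
  refine (pow_lt_pow_iff_left₀ (norm_nonneg _) (norm_nonneg _) two_ne_zero).1 ?_
  have hid := sq_norm_one_sub_conj_mul_sub_sq_norm_sub a z
  have hpos : 0 < (1 - ‖a‖ ^ 2) * (1 - ‖z‖ ^ 2) := by
    apply mul_pos <;> nlinarith [norm_nonneg a, norm_nonneg z]
  linarith

theorem differentiableOn_mSigma (ha : ‖a‖ < 1) :
    DifferentiableOn ℂ (mSigma a) (closedBall 0 1) :=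
  (differentiableOn_const a |>.sub differentiableOn_id).div
    (differentiableOn_const 1 |>.sub (differentiableOn_const _ |>.mul differentiableOn_id))
    fun _ hw => one_sub_conj_mul_ne_zero ha (mem_closedBall_zero_iff.1 hw)

theorem mSigma_zero (a : ℂ) : mSigma a 0 = a := by simp [mSigma]

theorem mSigma_self (a : ℂ) : mSigma a a = 0 := by simp [mSigma]

theorem mSigma_mSigma (ha : ‖a‖ < 1) (hz : ‖z‖ ≤ 1) : mSigma a (mSigma a z) = z := by
  have hD := one_sub_conj_mul_ne_zero ha hz
  have ha' : 1 - conj a * a ≠ 0 := one_sub_conj_mul_ne_zero ha ha.le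
  have hnum : a - (a - z) / (1 - conj a * z) = z * (1 - conj a * a) / (1 - conj a * z) := by
    rw [eq_div_iff hD, sub_mul, div_mul_cancel₀ _ hD]
    ring
  have hden : 1 - conj a * ((a - z) / (1 - conj a * z)) = (1 - conj a * a) / (1 - conj a * z) := by
    rw [eq_div_iff hD, sub_mul, mul_assoc, div_mul_cancel₀ _ hD]
    ring
  rw [mSigma, mSigma, hnum, hden, div_div_div_cancel_right₀ hD, mul_div_cancel_right₀ _ ha']

end Mobius

theorem mapsTo_closedBall_of_mapsTo_ball {E F : Type*} [NormedAddCommGroup E] [NormedSpace ℝ E]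
    [PseudoMetricSpace F] {f : E → F} {x : E} {y : F} {r s : ℝ} (hr : r ≠ 0)
    (hc : ContinuousOn f (closedBall x r)) (hf : MapsTo f (ball x r) (ball y s)) :
    MapsTo f (closedBall x r) (closedBall y s) := by
  rw [← closure_ball x hr] at hc ⊢
  exact (hf.closure_of_continuousOn hc).mono_right closure_ball_subset_closedBall

section BoundaryNorm

variable {F G : ℂ → ℂ}

theorem bnormSq_eq_circleAverage (F : ℂ → ℂ) :
    bnormSq F = 2 * π * circleAverage (fun z => ‖F z‖ ^ 2) 0 1 := by
  rw [circleAverage_def, smul_eq_mul, ← mul_assoc, mul_inv_cancel₀ Real.two_pi_pos.ne', one_mul,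
    bnormSq]
  simp [circleMap_zero]

theorem circleIntegrable_sq_norm (hF : ContinuousOn F (sphere 0 1)) :
    CircleIntegrable (fun z => ‖F z‖ ^ 2) 0 1 :=
  (hF.norm.pow 2).circleIntegrable zero_le_one

theorem bnormSq_congr_norm (h : ∀ z ∈ sphere (0 : ℂ) 1, ‖F z‖ = ‖G z‖) :
    bnormSq F = bnormSq G := by
  rw [bnormSq_eq_circleAverage, bnormSq_eq_circleAverage]
  congr 1
  exact circleAverage_congr_sphere fun z hz => by rw [abs_one] at hz; simp only [h z hz]

theorem bnormSq_mono (hF : ContinuousOn F (sphere 0 1)) (hG : ContinuousOn G (sphere 0 1))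
    (h : ∀ z ∈ sphere (0 : ℂ) 1, ‖F z‖ ≤ ‖G z‖) : bnormSq F ≤ bnormSq G := by
  rw [bnormSq_eq_circleAverage, bnormSq_eq_circleAverage]
  gcongr 2 * π * ?_
  refine circleAverage_mono (circleIntegrable_sq_norm hF) (circleIntegrable_sq_norm hG)
    fun z hz => ?_
  rw [abs_one] at hz
  exact pow_le_pow_left₀ (norm_nonneg _) (h z hz) 2

theorem bnormSq_const_add (c : ℂ) (hG : DiffContOnCl ℂ G (ball 0 1)) (hG0 : G 0 = 0) :
    bnormSq (fun z => c + G z) = 2 * π * ‖c‖ ^ 2 + bnormSq G := by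
  have hGs : ContinuousOn G (sphere 0 1) := hG.continuousOn_ball.mono sphere_subset_closedBall
  have hcGs : ContinuousOn (fun z => conj c * G z) (sphere 0 1) := continuousOn_const.mul hGs
  have hmean : circleAverage (fun z => conj c * G z) 0 1 = 0 := by
    simp only [← smul_eq_mul, circleAverage_fun_smul]
    rw [DiffContOnCl.circleAverage (by rwa [abs_one]), hG0, smul_zero]
  have hcross : circleAverage (fun z => 2 * (conj c * G z).re) 0 1 = 0 := by
    simp only [← smul_eq_mul (a := (2 : ℝ)), circleAverage_fun_smul]
    have hre : circleAverage (fun z => (conj c * G z).re) 0 1 = 0 :=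
      (Complex.reCLM.circleAverage_comp_comm (hcGs.circleIntegrable zero_le_one)).trans
        (by rw [hmean, map_zero])
    rw [hre, smul_zero]
  have hexpand : ∀ z, ‖c + G z‖ ^ 2 = (‖c‖ ^ 2 + 2 * (conj c * G z).re) + ‖G z‖ ^ 2 := by
    intro z
    simp only [Complex.sq_norm, Complex.normSq_add, Complex.mul_re, Complex.conj_re,
      Complex.conj_im]
    ring
  have hcrossInt : CircleIntegrable (fun z => 2 * (conj c * G z).re) 0 1 :=
    (continuousOn_const.mul (Complex.continuous_re.comp_continuousOn hcGs)).circleIntegrable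
      zero_le_one
  simp only [bnormSq_eq_circleAverage, hexpand]
  rw [circleAverage_fun_add (f₁ := fun z => ‖c‖ ^ 2 + 2 * (conj c * G z).re)
    (circleIntegrable_const _ _ _ |>.add hcrossInt) (circleIntegrable_sq_norm hGs),
    circleAverage_fun_add (circleIntegrable_const _ _ _) hcrossInt, circleAverage_const, hcross]
  ring

end BoundaryNorm

theorem bnormSq_eval_comp_le {ψ : ℂ → ℂ} (hψ : DiffContOnCl ℂ ψ (ball 0 1))
    (hψ1 : MapsTo ψ (sphere 0 1) (closedBall 0 1)) (hψ0 : ψ 0 = 0) (q : ℂ[X]) :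
    bnormSq (fun z => q.eval (ψ z)) ≤ bnormSq fun z => q.eval z := by
  have hψs : ContinuousOn ψ (sphere 0 1) := hψ.continuousOn_ball.mono sphere_subset_closedBall
  induction q using Polynomial.recOnHorner with
  | M0 => simp
  | MC p a hp0 _ ih =>
    have hp0' : p.eval 0 = 0 := by rwa [← coeff_zero_eq_eval_zero]
    simp only [eval_add, eval_C, add_comm _ a]
    rw [bnormSq_const_add (G := fun z => p.eval (ψ z)) a
        (p.differentiable.comp_diffContOnCl hψ) (by simpa [hψ0]),
      bnormSq_const_add a p.differentiable.diffContOnCl hp0']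
    linarith
  | MX p _ ih =>
    simp only [eval_mul, eval_X]
    calc bnormSq (fun z => p.eval (ψ z) * ψ z) ≤ bnormSq (fun z => p.eval (ψ z)) := by
          refine bnormSq_mono ((p.continuous.comp_continuousOn hψs).mul hψs)
            (p.continuous.comp_continuousOn hψs) fun z hz => ?_
          rw [norm_mul]
          exact mul_le_of_le_one_right (norm_nonneg _) (mem_closedBall_zero_iff.1 (hψ1 hz))
      _ ≤ bnormSq (fun z => p.eval z) := ih
      _ = bnormSq (fun z => p.eval z * z) :=
          bnormSq_congr_norm fun z hz => by rw [norm_mul, mem_sphere_zero_iff_norm.1 hz, mul_one]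

theorem tendsto_bnormSq_of_tendstoUniformlyOn {ι : Type*} {l : Filter ι} [l.NeBot]
    [l.IsCountablyGenerated] {F : ι → ℂ → ℂ} {G : ℂ → ℂ}
    (hF : ∀ᶠ i in l, ContinuousOn (F i) (sphere 0 1))
    (h : TendstoUniformlyOn F G l (sphere 0 1)) :
    Tendsto (fun i => bnormSq (F i)) l (𝓝 (bnormSq G)) := by
  have hcirc : ∀ θ : ℝ, Complex.exp (θ * Complex.I) ∈ sphere (0 : ℂ) 1 := fun θ => by simp
  obtain ⟨C, hC⟩ := (isCompact_sphere (0 : ℂ) 1).exists_bound_of_continuousOn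
    (h.continuousOn hF.frequently)
  have hFC : ∀ᶠ i in l, ∀ z ∈ sphere (0 : ℂ) 1, F i z ∈ closedBall 0 (C + 1) := by
    filter_upwards [Metric.tendstoUniformlyOn_iff.1 h 1 one_pos] with i hi z hz
    rw [mem_closedBall_zero_iff]
    linarith [hC z hz, hi z hz, norm_le_norm_add_norm_sub' (F i z) (G z),
      dist_eq_norm' (G z) (F i z)]
  have hsq : TendstoUniformlyOn (fun i z => ‖F i z‖ ^ 2) (fun z => ‖G z‖ ^ 2) l (sphere 0 1) :=
    ((isCompact_closedBall (0 : ℂ) (C + 1)).uniformContinuousOn_of_continuous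
      (continuous_norm.pow 2).continuousOn).comp_tendstoUniformlyOn_eventually hFC
      (fun z hz => mem_closedBall_zero_iff.2 ((hC z hz).trans (by linarith))) h
  refine ((hsq.comp _).mono fun θ _ => hcirc θ).tendsto_intervalIntegral_of_continuousOn ?_
  filter_upwards [hF] with i hi
  exact ((hi.norm.pow 2).comp_continuous (by fun_prop) hcirc).continuousOn

theorem FormalMultilinearSeries.partialSum_eq_eval (p : FormalMultilinearSeries ℂ ℂ ℂ) (n : ℕ)
    (z : ℂ) : p.partialSum n z = (∑ k ∈ Finset.range n, C (p.coeff k) * X ^ k).eval z := by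
  simp only [FormalMultilinearSeries.partialSum, eval_finsetSum, eval_mul, eval_C, eval_pow,
    eval_X, FormalMultilinearSeries.apply_eq_pow_smul_coeff, smul_eq_mul, mul_comm]

theorem ContinuousOn.tendstoUniformlyOn_comp_mul {g : ℂ → ℂ}
    (hg : ContinuousOn g (closedBall 0 1)) :
    TendstoUniformlyOn (fun (r : ℝ) z => g (r * z)) g (𝓝[<] 1) (closedBall 0 1) := by
  refine Metric.tendstoUniformlyOn_iff.2 fun ε hε => ?_
  obtain ⟨δ, hδ, hgδ⟩ := Metric.uniformContinuousOn_iff.1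
    ((isCompact_closedBall (0 : ℂ) 1).uniformContinuousOn_of_continuous hg) ε hε
  filter_upwards [Ioo_mem_nhdsLT (by linarith : 1 - δ < 1), Ioo_mem_nhdsLT zero_lt_one]
    with r ⟨hrδ, hr1⟩ ⟨hr0, _⟩ z hz
  rw [mem_closedBall_zero_iff] at hz
  have hrz : ‖(r : ℂ) * z‖ = r * ‖z‖ := by
    rw [norm_mul, Complex.norm_real, Real.norm_of_nonneg hr0.le]
  have hdist : dist z (r * z) = (1 - r) * ‖z‖ := by
    rw [dist_eq_norm, show z - r * z = ((1 - r : ℝ) : ℂ) * z by push_cast; ring, norm_mul,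
      Complex.norm_real, Real.norm_of_nonneg (by linarith)]
  refine hgδ z (mem_closedBall_zero_iff.2 hz) _ ?_ ?_
  · rw [mem_closedBall_zero_iff, hrz]
    nlinarith [norm_nonneg z]
  · rw [hdist]
    nlinarith [norm_nonneg z]

theorem DiffContOnCl.exists_polynomial_dist_lt {g : ℂ → ℂ} (hg : DiffContOnCl ℂ g (ball 0 1))
    {ε : ℝ} (hε : 0 < ε) : ∃ q : ℂ[X], ∀ z ∈ closedBall (0 : ℂ) 1, dist (g z) (q.eval z) < ε := by
  obtain ⟨r, ⟨hr0, hr1⟩, hgr⟩ := ((eventually_mem_set.2 (Ioo_mem_nhdsLT zero_lt_one)).and <|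
    Metric.tendstoUniformlyOn_iff.1 hg.continuousOn_ball.tendstoUniformlyOn_comp_mul (ε / 2)
      (half_pos hε)).exists
  obtain ⟨r', hrr', hr'1⟩ := exists_between (Real.toNNReal_lt_one.2 hr1)
  obtain ⟨n, hn⟩ := (Metric.tendstoUniformlyOn_iff.1
    ((hg.hasFPowerSeriesOnBall (R := 1) one_pos).tendstoUniformlyOn (r' := r')
      (by exact_mod_cast hr'1)) (ε / 2) (half_pos hε)).exists
  refine ⟨(∑ k ∈ Finset.range n, C ((cauchyPowerSeries g 0 1).coeff k) * X ^ k).comp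
    (C (r : ℂ) * X), fun z hz => ?_⟩
  have hrz : (r : ℂ) * z ∈ ball (0 : ℂ) r' := by
    rw [mem_ball_zero_iff, norm_mul, Complex.norm_real, Real.norm_of_nonneg hr0.le]
    have hz1 := mem_closedBall_zero_iff.1 hz
    have hrr'' : r < r' := by rwa [← Real.coe_toNNReal r hr0.le, NNReal.coe_lt_coe]
    nlinarith [norm_nonneg z]
  rw [eval_comp, eval_mul, eval_C, eval_X, ← FormalMultilinearSeries.partialSum_eq_eval]
  calc dist (g z) _ ≤ dist (g z) (g (r * z)) + dist (g (r * z)) _ := dist_triangle _ _ _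
    _ < ε / 2 + ε / 2 := add_lt_add (hgr z hz) (by simpa using hn _ hrz)
    _ = ε := add_halves ε

theorem DiffContOnCl.exists_tendstoUniformlyOn_polynomial {g : ℂ → ℂ}
    (hg : DiffContOnCl ℂ g (ball 0 1)) :
    ∃ q : ℕ → ℂ[X], TendstoUniformlyOn (fun n z => (q n).eval z) g atTop (closedBall 0 1) := by
  choose q hq using fun n : ℕ => hg.exists_polynomial_dist_lt (Nat.one_div_pos_of_nat (n := n))
  refine ⟨q, Metric.tendstoUniformlyOn_iff.2 fun ε hε => ?_⟩
  obtain ⟨N, hN⟩ := exists_nat_one_div_lt hε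
  filter_upwards [eventually_ge_atTop N] with n hn z hz
  exact (hq n z hz).trans_le ((Nat.one_div_le_one_div hn).trans hN.le)

theorem bnormSq_comp_le {g ψ : ℂ → ℂ} (hg : DiffContOnCl ℂ g (ball 0 1))
    (hψ : DiffContOnCl ℂ ψ (ball 0 1)) (hψ1 : MapsTo ψ (sphere 0 1) (closedBall 0 1))
    (hψ0 : ψ 0 = 0) : bnormSq (fun z => g (ψ z)) ≤ bnormSq g := by
  have hψs : ContinuousOn ψ (sphere 0 1) := hψ.continuousOn_ball.mono sphere_subset_closedBall
  obtain ⟨q, hq⟩ := hg.exists_tendstoUniformlyOn_polynomial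
  refine le_of_tendsto_of_tendsto'
    (tendsto_bnormSq_of_tendstoUniformlyOn (.of_forall fun n => ?_) ((hq.comp ψ).mono hψ1))
    (tendsto_bnormSq_of_tendstoUniformlyOn (.of_forall fun n => ?_)
      (hq.mono sphere_subset_closedBall)) fun n => bnormSq_eval_comp_le hψ hψ1 hψ0 (q n)
  · exact (q n).continuous.comp_continuousOn hψs
  · exact (q n).continuous.continuousOn

theorem bnormSq_comp_mSigma_sub_le_s10 {φ f : ℂ → ℂ} (hφ : DiffContOnCl ℂ φ (ball 0 1))
    (hφm : MapsTo φ (ball 0 1) (ball 0 1)) (hf : DiffContOnCl ℂ f (ball 0 1)) {a : ℂ}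
    (ha : ‖a‖ < 1) :
    bnormSq (fun ξ => f (φ (mSigma a ξ)) - f (φ a))
      ≤ bnormSq (fun ξ => f (mSigma (φ a) ξ) - f (φ a)) := by
  set b := φ a
  have hb : ‖b‖ < 1 := mem_ball_zero_iff.1 (hφm (mem_ball_zero_iff.2 ha))
  have hσ {c : ℂ} (hc : ‖c‖ < 1) : DiffContOnCl ℂ (mSigma c) (ball 0 1) :=
    (differentiableOn_mSigma hc).diffContOnCl_ball subset_rfl
  have hφσ : DiffContOnCl ℂ (φ ∘ mSigma a) (ball 0 1) := hφ.comp (hσ ha) (mapsTo_mSigma_ball ha)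
  have hφσm : MapsTo (φ ∘ mSigma a) (ball 0 1) (ball 0 1) := hφm.comp (mapsTo_mSigma_ball ha)
  have hψ : DiffContOnCl ℂ (mSigma b ∘ φ ∘ mSigma a) (ball 0 1) := (hσ hb).comp hφσ hφσm
  have hψm : MapsTo (mSigma b ∘ φ ∘ mSigma a) (ball 0 1) (ball 0 1) :=
    (mapsTo_mSigma_ball hb).comp hφσm
  have hg : DiffContOnCl ℂ (fun z => f (mSigma b z) - f b) (ball 0 1) :=
    (hf.comp (hσ hb) (mapsTo_mSigma_ball hb)).sub_const _
  have hsub := bnormSq_comp_le hg hψ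
    ((mapsTo_closedBall_of_mapsTo_ball one_ne_zero hψ.continuousOn_ball hψm).mono_left
      sphere_subset_closedBall) (by simp [mSigma_zero, mSigma_self, b])
  refine le_of_eq_of_le (bnormSq_congr_norm fun ξ hξ => ?_) hsub
  have hφσξ := mapsTo_closedBall_of_mapsTo_ball one_ne_zero hφσ.continuousOn_ball hφσm
    (sphere_subset_closedBall hξ)
  rw [Function.comp_apply, mem_closedBall_zero_iff] at hφσξ
  simp only [Function.comp_apply, mSigma_mSigma hb hφσξ]

theorem composition_contraction_of_fix_zero_general (p : ℝ) (hp : p ∈ Set.Icc (0:ℝ) 1)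
    (φ f : ℂ → ℂ) (M : ℝ)
    (hφd : DifferentiableOn ℂ φ (Metric.ball (0:ℂ) 1))
    (hφm : Set.MapsTo φ (Metric.ball (0:ℂ) 1) (Metric.ball (0:ℂ) 1))
    (hφc : ContinuousOn φ (Metric.closedBall (0:ℂ) 1))
    (hφ0 : φ 0 = 0)
    (hfd : DifferentiableOn ℂ f (Metric.ball (0:ℂ) 1))
    (hfc : ContinuousOn f (Metric.closedBall (0:ℂ) 1))
    (hfM : ∀ a ∈ Metric.ball (0:ℂ) 1,
      (1 - ‖a‖ ^ 2) ^ ((1 - p) / 2) *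
        Real.sqrt (bnormSq fun ξ => f (mSigma a ξ) - f a) ≤ M) :
    ∀ a ∈ Metric.ball (0:ℂ) 1,
      (1 - ‖a‖ ^ 2) ^ ((1 - p) / 2) *
        Real.sqrt (bnormSq fun ξ => f (φ (mSigma a ξ)) - f (φ a)) ≤ M := by
  intro a ha
  have ha1 : ‖a‖ < 1 := mem_ball_zero_iff.1 ha
  have hschwarz : ‖φ a‖ ≤ ‖a‖ :=
    Complex.norm_le_norm_of_mapsTo_ball hφd (hφm.mono_right ball_subset_closedBall) hφ0 ha1
  have hweight : (1 - ‖a‖ ^ 2) ^ ((1 - p) / 2) ≤ (1 - ‖φ a‖ ^ 2) ^ ((1 - p) / 2) :=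
    Real.rpow_le_rpow (by nlinarith [norm_nonneg a]) (by nlinarith [norm_nonneg (φ a)])
      (by linarith [hp.2])
  have hsub := bnormSq_comp_mSigma_sub_le_s10 (.mk_ball hφd hφc) hφm (.mk_ball hfd hfc) ha1
  calc _ ≤ (1 - ‖φ a‖ ^ 2) ^ ((1 - p) / 2) *
        Real.sqrt (bnormSq fun ξ => f (mSigma (φ a) ξ) - f (φ a)) :=
        mul_le_mul hweight (Real.sqrt_le_sqrt hsub) (Real.sqrt_nonneg _)
          (Real.rpow_nonneg (by nlinarith [norm_nonneg (φ a)]) _)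
    _ ≤ M := hfM _ (hφm ha)

/-- If `p ∈ [0,1]` and `φ` is an analytic self-map of the disk fixing `0`, then the
composition operator `C_φ` is a contraction for the `CA_p` seminorm
`‖f‖_{CA_p,*} = sup_{a∈D} (1-|a|²)^{(1-p)/2} ‖f∘σ_a − f(a)‖₂`: any upper bound `M` for
the seminorm of `f` also bounds the seminorm of `f∘φ`. -/
theorem composition_contraction_of_fix_zero (p : ℝ) (hp : p ∈ Set.Icc (0:ℝ) 1)
    (φ f : ℂ → ℂ) (M : ℝ)
    (hφd : DifferentiableOn ℂ φ (Metric.ball (0:ℂ) 1))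
    (hφm : Set.MapsTo φ (Metric.ball (0:ℂ) 1) (Metric.ball (0:ℂ) 1))
    (hφc : ContinuousOn φ (Metric.closedBall (0:ℂ) 1))
    (hφmc : Set.MapsTo φ (Metric.closedBall (0:ℂ) 1) (Metric.closedBall (0:ℂ) 1))
    (hφ0 : φ 0 = 0)
    (hfd : DifferentiableOn ℂ f (Metric.ball (0:ℂ) 1))
    (hfc : ContinuousOn f (Metric.closedBall (0:ℂ) 1))
    (hfM : ∀ a ∈ Metric.ball (0:ℂ) 1,
      (1 - ‖a‖ ^ 2) ^ ((1 - p) / 2) *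
        Real.sqrt (bnormSq fun ξ => f (mSigma a ξ) - f a) ≤ M) :
    ∀ a ∈ Metric.ball (0:ℂ) 1,
      (1 - ‖a‖ ^ 2) ^ ((1 - p) / 2) *
        Real.sqrt (bnormSq fun ξ => f (φ (mSigma a ξ)) - f (φ a)) ≤ M :=
  composition_contraction_of_fix_zero_general p hp φ f M hφd hφm hφc hφ0 hfd hfc hfM
end

section
/- For p ∈ (1,2), a composition operator C_φ (for φ an analytic self-map of D) is bounded on the Campanato space CA_p (= Lipschitz space A_{(p-1)/2}) if and only if sup_{a∈D} ((1-|a|^2)/(1-|φ(a)|^2))^{(3-p)/2} |φ'(a)| < ∞. -/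
/-!
Write `Q(a) = ((1 - |a|²)/(1 - |φ(a)|²))^α |φ'(a)|` with `α = (3 - p)/2`. By the chain rule,
`(1 - |a|²)^α |(f ∘ φ)'(a)| = Q(a) · (1 - |φ(a)|²)^α |f'(φ(a))|`, so a bound on `Q` bounds `C_φ`.
Conversely, for `b = φ(a)` the primitive `f` of `(1 - b̄z)^(-α)` (which exists by Morera's theorem
on the disk) has seminorm at most `2^α`, because `1 - |z|² ≤ 2|1 - b̄z|`, while
`(1 - |b|²)^α |f'(b)| = 1`; the identity above at `a` then gives `Q(a) ≤ 2^α C`.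
-/

open Complex ComplexConjugate Metric

lemma one_sub_norm_sq_pos {a : ℂ} (ha : a ∈ ball (0 : ℂ) 1) : 0 < 1 - ‖a‖ ^ 2 := by
  rw [mem_ball_zero_iff] at ha
  nlinarith [norm_nonneg a]

lemma one_sub_norm_mul_norm_le_re_one_sub_conj_mul (b z : ℂ) :
    1 - ‖b‖ * ‖z‖ ≤ (1 - conj b * z).re := by
  have h := re_le_norm (conj b * z)
  rw [norm_mul, norm_conj] at h
  simp only [sub_re, one_re]
  linarith

lemma one_sub_conj_mul_mem_slitPlane {b z : ℂ} (hb : ‖b‖ ≤ 1) (hz : z ∈ ball (0 : ℂ) 1) :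
    1 - conj b * z ∈ slitPlane := by
  rw [mem_ball_zero_iff] at hz
  refine mem_slitPlane_iff.mpr (Or.inl ?_)
  nlinarith [one_sub_norm_mul_norm_le_re_one_sub_conj_mul b z, norm_nonneg b, norm_nonneg z]

lemma one_sub_norm_sq_le_two_mul_norm_one_sub_conj_mul {b : ℂ} (hb : ‖b‖ ≤ 1) (z : ℂ) :
    1 - ‖z‖ ^ 2 ≤ 2 * ‖1 - conj b * z‖ := by
  have hre := one_sub_norm_mul_norm_le_re_one_sub_conj_mul b z
  have hnorm := re_le_norm (1 - conj b * z)
  nlinarith [norm_nonneg b, norm_nonneg z, sq_nonneg (1 - ‖z‖)]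

lemma norm_one_sub_conj_mul_self (b : ℂ) : ‖1 - conj b * b‖ = |1 - ‖b‖ ^ 2| := by
  have h : 1 - conj b * b = ((1 - ‖b‖ ^ 2 : ℝ) : ℂ) := by
    rw [mul_comm, mul_conj, normSq_eq_norm_sq]
    push_cast
    ring
  rw [h, norm_real, Real.norm_eq_abs]

section Weighted

variable (α : ℝ)

/-- The seminorm of `f` in the analytic Lipschitz space `A_{1-α}` is at most `M`. -/
def WeightedDerivLE (f : ℂ → ℂ) (M : ℝ) : Prop :=
  ∀ a ∈ ball (0 : ℂ) 1, (1 - ‖a‖ ^ 2) ^ α * ‖deriv f a‖ ≤ M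

variable {α}

lemma weighted_norm_deriv_comp_eq {f φ : ℂ → ℂ} {a : ℂ} (ha : 0 ≤ 1 - ‖a‖ ^ 2)
    (hφa : 0 < 1 - ‖φ a‖ ^ 2) (hf : DifferentiableAt ℂ f (φ a)) (hφ : DifferentiableAt ℂ φ a) :
    (1 - ‖a‖ ^ 2) ^ α * ‖deriv (f ∘ φ) a‖ =
      ((1 - ‖a‖ ^ 2) / (1 - ‖φ a‖ ^ 2)) ^ α * ‖deriv φ a‖ *
        ((1 - ‖φ a‖ ^ 2) ^ α * ‖deriv f (φ a)‖) := by
  have hpos : 0 < (1 - ‖φ a‖ ^ 2) ^ α := Real.rpow_pos_of_pos hφa α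
  rw [deriv_comp a hf hφ, norm_mul, Real.div_rpow ha hφa.le]
  field_simp

lemma exists_primitive_one_sub_conj_mul_cpow {b : ℂ} (hb : ‖b‖ ≤ 1) :
    ∃ f : ℂ → ℂ, ∀ z ∈ ball (0 : ℂ) 1,
      HasDerivAt f ((1 - conj b * z) ^ ((-α : ℝ) : ℂ)) z := by
  refine DifferentiableOn.isExactOn_ball fun z hz => ?_
  exact (DifferentiableAt.cpow_const (f := fun w => 1 - conj b * w) (by fun_prop)
    (one_sub_conj_mul_mem_slitPlane hb hz)).differentiableWithinAt

lemma exists_weightedDerivLE_two_rpow (hα : 0 ≤ α) {b : ℂ} (hb : b ∈ ball (0 : ℂ) 1) :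
    ∃ f : ℂ → ℂ, DifferentiableOn ℂ f (ball (0 : ℂ) 1) ∧ WeightedDerivLE α f (2 ^ α) ∧
      (1 - ‖b‖ ^ 2) ^ α * ‖deriv f b‖ = 1 := by
  have hb1 : ‖b‖ ≤ 1 := (mem_ball_zero_iff.mp hb).le
  obtain ⟨f, hf⟩ := exists_primitive_one_sub_conj_mul_cpow (α := α) hb1
  have hnorm : ∀ z ∈ ball (0 : ℂ) 1, ‖deriv f z‖ = ‖1 - conj b * z‖ ^ (-α) := fun z hz => by
    rw [(hf z hz).deriv, norm_cpow_real]
  refine ⟨f, fun z hz => (hf z hz).differentiableAt.differentiableWithinAt, fun z hz => ?_, ?_⟩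
  · have ht : 0 < ‖1 - conj b * z‖ :=
      norm_pos_iff.mpr (slitPlane_ne_zero (one_sub_conj_mul_mem_slitPlane hb1 hz))
    calc (1 - ‖z‖ ^ 2) ^ α * ‖deriv f z‖
        ≤ (2 * ‖1 - conj b * z‖) ^ α * ‖1 - conj b * z‖ ^ (-α) := by
          rw [hnorm z hz]
          gcongr
          · exact (one_sub_norm_sq_pos hz).le
          · exact one_sub_norm_sq_le_two_mul_norm_one_sub_conj_mul hb1 z
      _ = 2 ^ α := by
          rw [Real.mul_rpow zero_le_two ht.le, mul_assoc, ← Real.rpow_add ht, add_neg_cancel,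
            Real.rpow_zero, mul_one]
  · have hB := one_sub_norm_sq_pos hb
    rw [hnorm b hb, norm_one_sub_conj_mul_self, abs_of_pos hB, ← Real.rpow_add hB,
      add_neg_cancel, Real.rpow_zero]

lemma WeightedDerivLE.nonneg {f : ℂ → ℂ} {M : ℝ} (h : WeightedDerivLE α f M) : 0 ≤ M :=
  (mul_nonneg (Real.rpow_nonneg (one_sub_norm_sq_pos (mem_ball_self one_pos)).le _)
    (norm_nonneg _)).trans (h 0 (mem_ball_self one_pos))

lemma WeightedDerivLE.mono {f : ℂ → ℂ} {M M' : ℝ} (h : WeightedDerivLE α f M) (hM : M ≤ M') :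
    WeightedDerivLE α f M' :=
  fun a ha => (h a ha).trans hM

variable {φ : ℂ → ℂ}

theorem weightedDerivLE_comp_of_forall_le (hφd : DifferentiableOn ℂ φ (ball (0 : ℂ) 1))
    (hφm : Set.MapsTo φ (ball (0 : ℂ) 1) (ball (0 : ℂ) 1)) {K : ℝ}
    (hK : ∀ a ∈ ball (0 : ℂ) 1, ((1 - ‖a‖ ^ 2) / (1 - ‖φ a‖ ^ 2)) ^ α * ‖deriv φ a‖ ≤ K)
    {f : ℂ → ℂ} (hf : DifferentiableOn ℂ f (ball (0 : ℂ) 1)) {M : ℝ}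
    (hM : WeightedDerivLE α f M) : WeightedDerivLE α (f ∘ φ) (K * M) := by
  intro a ha
  have hφa := hφm ha
  rw [weighted_norm_deriv_comp_eq (one_sub_norm_sq_pos ha).le (one_sub_norm_sq_pos hφa)
    (hf.differentiableAt (isOpen_ball.mem_nhds hφa))
    (hφd.differentiableAt (isOpen_ball.mem_nhds ha))]
  have hQ : 0 ≤ ((1 - ‖a‖ ^ 2) / (1 - ‖φ a‖ ^ 2)) ^ α * ‖deriv φ a‖ :=
    mul_nonneg (Real.rpow_nonneg (div_nonneg (one_sub_norm_sq_pos ha).le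
      (one_sub_norm_sq_pos hφa).le) _) (norm_nonneg _)
  exact mul_le_mul (hK a ha) (hM (φ a) hφa)
    (mul_nonneg (Real.rpow_nonneg (one_sub_norm_sq_pos hφa).le _) (norm_nonneg _))
    (hQ.trans (hK a ha))

theorem forall_le_of_weightedDerivLE_comp (hα : 0 ≤ α)
    (hφd : DifferentiableOn ℂ φ (ball (0 : ℂ) 1))
    (hφm : Set.MapsTo φ (ball (0 : ℂ) 1) (ball (0 : ℂ) 1)) {C : ℝ}
    (hC : ∀ f : ℂ → ℂ, DifferentiableOn ℂ f (ball (0 : ℂ) 1) →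
      ∀ M : ℝ, WeightedDerivLE α f M → WeightedDerivLE α (f ∘ φ) (C * M)) :
    ∀ a ∈ ball (0 : ℂ) 1,
      ((1 - ‖a‖ ^ 2) / (1 - ‖φ a‖ ^ 2)) ^ α * ‖deriv φ a‖ ≤ C * 2 ^ α := by
  intro a ha
  have hφa := hφm ha
  obtain ⟨f, hfd, hfM, hfφa⟩ := exists_weightedDerivLE_two_rpow hα hφa
  have h := hC f hfd _ hfM a ha
  rwa [weighted_norm_deriv_comp_eq (one_sub_norm_sq_pos ha).le (one_sub_norm_sq_pos hφa)
    (hfd.differentiableAt (isOpen_ball.mem_nhds hφa))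
    (hφd.differentiableAt (isOpen_ball.mem_nhds ha)), hfφa, mul_one] at h

end Weighted

/-- For `p ∈ (1,2)`, the composition operator `C_φ` (for an analytic self-map `φ` of the
unit disk) is bounded on the Lipschitz space `A_{(p-1)/2}` (equal to the Campanato space
`CA_p`), with seminorm `sup_{a∈D} (1-|a|²)^{(3-p)/2}|f'(a)|`, if and only if
`sup_{a∈D} ((1-|a|²)/(1-|φ(a)|²))^{(3-p)/2} |φ'(a)| < ∞`. -/
theorem composition_bounded_lipschitz_iff (p : ℝ) (hp : p ∈ Set.Ioo (1:ℝ) 2) (φ : ℂ → ℂ)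
    (hφd : DifferentiableOn ℂ φ (Metric.ball (0:ℂ) 1))
    (hφm : Set.MapsTo φ (Metric.ball (0:ℂ) 1) (Metric.ball (0:ℂ) 1)) :
    (∃ C > 0, ∀ f : ℂ → ℂ, DifferentiableOn ℂ f (Metric.ball (0:ℂ) 1) →
      ∀ M : ℝ,
        (∀ a ∈ Metric.ball (0:ℂ) 1, (1 - ‖a‖ ^ 2) ^ ((3 - p) / 2) * ‖deriv f a‖ ≤ M) →
        ∀ a ∈ Metric.ball (0:ℂ) 1,
          (1 - ‖a‖ ^ 2) ^ ((3 - p) / 2) * ‖deriv (f ∘ φ) a‖ ≤ C * M) ↔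
    (∃ K : ℝ, ∀ a ∈ Metric.ball (0:ℂ) 1,
      ((1 - ‖a‖ ^ 2) / (1 - ‖φ a‖ ^ 2)) ^ ((3 - p) / 2) * ‖deriv φ a‖ ≤ K) := by
  have hα : 0 ≤ (3 - p) / 2 := by linarith [hp.2]
  constructor
  · rintro ⟨C, -, hC⟩
    exact ⟨C * 2 ^ ((3 - p) / 2), forall_le_of_weightedDerivLE_comp hα hφd hφm hC⟩
  · rintro ⟨K, hK⟩
    refine ⟨max K 1, by positivity, fun f hf M hM => ?_⟩
    exact (weightedDerivLE_comp_of_forall_le hφd hφm hK hf hM).mono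
      (mul_le_mul_of_nonneg_right (le_max_left K 1) (WeightedDerivLE.nonneg hM))
end
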